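/- arXiv:2209.13857 — 3 statements merged into one kernel-verified Lean document; each statement's English description precedes it below -/
import Mathlib

section
/- Let p be a nonnegative integer and let λ > 1. Set I = (−1,1) and I_λ = (−λ,λ). Then for every real polynomial g of degree at most p, ∫_{I_λ \ I} g(x)² dx ≤ (1/2)·[(λ + √(λ²−1))^{2p+1} − 1] · ∫_{I} g(x)² dx. -/
open MeasureTheory Polynomial Finset intervalIntegral

noncomputable section

namespace DIE

def H (k : ℕ) : Polynomial ℝ := (X - C 1) ^ k * (X + C 1) ^ k

def R (k : ℕ) : Polynomial ℝ := Polynomial.derivative^[k] (H k)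

lemma X_add_one : (X + C 1 : Polynomial ℝ) = X - C (-1) := by
  simp [sub_neg_eq_add]

lemma monic_H (k : ℕ) : (H k).Monic :=
  ((monic_X_sub_C 1).pow k).mul (by rw [X_add_one]; exact (monic_X_sub_C (-1)).pow k)

lemma natDegree_H (k : ℕ) : (H k).natDegree = 2 * k := by
  rw [H, natDegree_mul (pow_ne_zero _ (X_sub_C_ne_zero 1))
    (by rw [X_add_one]; exact pow_ne_zero _ (X_sub_C_ne_zero (-1))),
    natDegree_pow, natDegree_pow, natDegree_X_sub_C, X_add_one, natDegree_X_sub_C]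
  ring

lemma eval_iterate_derivative_H (k i : ℕ) (t : ℝ) :
    eval t (Polynomial.derivative^[i] (H k)) = ∑ j ∈ range (i + 1),
      ((i.choose j * k.descFactorial (i - j) * k.descFactorial j : ℕ) : ℝ) *
        ((t - 1) ^ (k - (i - j)) * (t + 1) ^ (k - j)) := by
  rw [H, iterate_derivative_mul, eval_finset_sum]
  refine sum_congr rfl fun j hj => ?_
  rw [iterate_derivative_X_sub_pow, X_add_one, iterate_derivative_X_sub_pow]
  simp only [eval_smul, smul_eq_mul, eval_mul, eval_pow, eval_sub, eval_X, eval_C]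
  push_cast
  ring

lemma eval_one_iterate_derivative_H {k i : ℕ} (h : i < k) :
    eval 1 (Polynomial.derivative^[i] (H k)) = 0 := by
  rw [eval_iterate_derivative_H]
  refine sum_eq_zero fun j hj => ?_
  have hj' : j ≤ i := by simpa [Nat.lt_succ_iff] using hj
  rw [show (1:ℝ) - 1 = 0 by ring, zero_pow (by omega)]
  ring

lemma eval_neg_one_iterate_derivative_H {k i : ℕ} (h : i < k) :
    eval (-1) (Polynomial.derivative^[i] (H k)) = 0 := by
  rw [eval_iterate_derivative_H]
  refine sum_eq_zero fun j hj => ?_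
  have hj' : j ≤ i := by simpa [Nat.lt_succ_iff] using hj
  rw [show (-1:ℝ) + 1 = 0 by ring, zero_pow (by omega)]
  ring

lemma natDegree_R_le (k : ℕ) : (R k).natDegree ≤ k :=
  le_trans (natDegree_iterate_derivative _ _) (by rw [natDegree_H]; omega)

lemma coeff_R_self (k : ℕ) : (R k).coeff k = (((2 * k).descFactorial k : ℕ) : ℝ) := by
  rw [R, coeff_iterate_derivative]
  have h1 : (H k).coeff (k + k) = 1 := by
    have : k + k = (H k).natDegree := by rw [natDegree_H]; ring
    rw [this]; exact (monic_H k).coeff_natDegree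
  rw [h1, show k + k = 2 * k by ring]
  simp

-- Vandermonde: C(k,j)^2 ≤ C(2k, 2j)
lemma choose_sq_le (k j : ℕ) : (k.choose j) ^ 2 ≤ (2 * k).choose (2 * j) := by
  have h := Nat.add_choose_eq k k (2 * j)
  rw [show k + k = 2 * k by ring] at h
  rw [h, sq]
  refine Finset.single_le_sum (f := fun ij => k.choose ij.1 * k.choose ij.2)
    (fun i _ => Nat.zero_le _) (a := (j, j)) ?_
  simp [Finset.mem_antidiagonal]; ring

-- coefficient identity
lemma coeff_identity {k j : ℕ} (hj : j ≤ k) :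
    k.choose j * k.descFactorial (k - j) * k.descFactorial j
      = k.factorial * (k.choose j) ^ 2 := by
  rw [Nat.descFactorial_eq_factorial_mul_choose, Nat.descFactorial_eq_factorial_mul_choose,
    Nat.choose_symm hj]
  have h := Nat.choose_mul_factorial_mul_factorial hj
  nlinarith [h]

lemma binom_sum_le (k : ℕ) {x y : ℝ} (hx : 0 ≤ x) (hy : 0 ≤ y) :
    ∑ j ∈ range (k + 1), ((k.choose j : ℝ)) ^ 2 * (x ^ j * y ^ (k - j))
      ≤ (Real.sqrt x + Real.sqrt y) ^ (2 * k) := by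
  have hxy : ∀ m ∈ range (2 * k + 1),
      0 ≤ ((2 * k).choose m : ℝ) * Real.sqrt x ^ m * Real.sqrt y ^ (2 * k - m) := by
    intro m _; positivity
  have hexp : (Real.sqrt x + Real.sqrt y) ^ (2 * k)
      = ∑ m ∈ range (2 * k + 1), Real.sqrt x ^ m * Real.sqrt y ^ (2 * k - m) * ((2 * k).choose m : ℝ) :=
    add_pow _ _ _
  rw [hexp]
  have himg : ∑ j ∈ range (k + 1),
      (Real.sqrt x ^ (2 * j) * Real.sqrt y ^ (2 * k - 2 * j) * ((2 * k).choose (2 * j) : ℝ))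
      ≤ ∑ m ∈ range (2 * k + 1), Real.sqrt x ^ m * Real.sqrt y ^ (2 * k - m) * ((2 * k).choose m : ℝ) := by
    rw [show ∑ j ∈ range (k + 1),
        (Real.sqrt x ^ (2 * j) * Real.sqrt y ^ (2 * k - 2 * j) * ((2 * k).choose (2 * j) : ℝ))
        = ∑ m ∈ (range (k + 1)).image (fun j => 2 * j),
          Real.sqrt x ^ m * Real.sqrt y ^ (2 * k - m) * ((2 * k).choose m : ℝ) from
      (Finset.sum_image (f := fun m => Real.sqrt x ^ m * Real.sqrt y ^ (2 * k - m) * ((2 * k).choose m : ℝ))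
        (g := fun j => 2 * j)
        (fun a _ b _ hab => by omega : ∀ a ∈ range (k+1), ∀ b ∈ range (k+1), 2 * a = 2 * b → a = b)).symm]
    refine Finset.sum_le_sum_of_subset_of_nonneg ?_ (fun m hm _ => by positivity)
    intro m hm
    simp only [Finset.mem_image, Finset.mem_range] at hm ⊢
    omega
  refine le_trans (le_trans (Finset.sum_le_sum ?_) le_rfl) himg
  intro j hj
  have hj' : j ≤ k := by simpa [Nat.lt_succ_iff] using hj
  have h1 : x ^ j = Real.sqrt x ^ (2 * j) := by
    rw [pow_mul, Real.sq_sqrt hx]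
  have h2 : y ^ (k - j) = Real.sqrt y ^ (2 * k - 2 * j) := by
    rw [show 2 * k - 2 * j = 2 * (k - j) by omega, pow_mul, Real.sq_sqrt hy]
  rw [h1, h2]
  have h3 : ((k.choose j : ℝ)) ^ 2 ≤ ((2 * k).choose (2 * j) : ℝ) := by
    exact_mod_cast choose_sq_le k j
  have h4 : 0 ≤ Real.sqrt x ^ (2 * j) * Real.sqrt y ^ (2 * k - 2 * j) := by positivity
  nlinarith [h4, h3]

lemma sqrt_add_sq {t : ℝ} (ht : 1 ≤ t) :
    (Real.sqrt (t - 1) + Real.sqrt (t + 1)) ^ 2 = 2 * (t + Real.sqrt (t ^ 2 - 1)) := by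
  have h1 : (0:ℝ) ≤ t - 1 := by linarith
  have h2 : (0:ℝ) ≤ t + 1 := by linarith
  have h3 : Real.sqrt (t - 1) * Real.sqrt (t + 1) = Real.sqrt (t ^ 2 - 1) := by
    rw [← Real.sqrt_mul h1]; ring_nf
  have h4 : Real.sqrt (t - 1) ^ 2 = t - 1 := Real.sq_sqrt h1
  have h5 : Real.sqrt (t + 1) ^ 2 = t + 1 := Real.sq_sqrt h2
  nlinarith [h3, h4, h5]



lemma eval_R_eq (k : ℕ) (t : ℝ) :
    eval t (R k) = ∑ j ∈ range (k + 1),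
      ((k.factorial * (k.choose j) ^ 2 : ℕ) : ℝ) * ((t - 1) ^ j * (t + 1) ^ (k - j)) := by
  rw [R, eval_iterate_derivative_H]
  refine sum_congr rfl fun j hj => ?_
  have hj' : j ≤ k := by simpa [Nat.lt_succ_iff] using hj
  rw [coeff_identity hj', show k - (k - j) = j by omega]

lemma eval_R_nonneg (k : ℕ) {t : ℝ} (ht : 1 ≤ t) : 0 ≤ eval t (R k) := by
  rw [eval_R_eq]
  refine Finset.sum_nonneg fun j _ => ?_
  have h1 : (0:ℝ) ≤ t - 1 := by linarith
  have h2 : (0:ℝ) ≤ t + 1 := by linarith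
  positivity

lemma eval_R_le (k : ℕ) {t : ℝ} (ht : 1 ≤ t) :
    eval t (R k) ≤ (k.factorial : ℝ) * 2 ^ k * (t + Real.sqrt (t ^ 2 - 1)) ^ k := by
  rw [eval_R_eq]
  have h1 : (0:ℝ) ≤ t - 1 := by linarith
  have h2 : (0:ℝ) ≤ t + 1 := by linarith
  have hb := binom_sum_le k h1 h2
  have hs := sqrt_add_sq ht
  calc ∑ j ∈ range (k + 1), ((k.factorial * (k.choose j) ^ 2 : ℕ) : ℝ)
        * ((t - 1) ^ j * (t + 1) ^ (k - j))
      = (k.factorial : ℝ) * ∑ j ∈ range (k + 1),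
          ((k.choose j : ℝ)) ^ 2 * ((t - 1) ^ j * (t + 1) ^ (k - j)) := by
        rw [Finset.mul_sum]; refine sum_congr rfl fun j _ => ?_; push_cast; ring
    _ ≤ (k.factorial : ℝ) * (Real.sqrt (t-1) + Real.sqrt (t+1)) ^ (2 * k) := by
        refine mul_le_mul_of_nonneg_left hb (by positivity)
    _ = (k.factorial : ℝ) * 2 ^ k * (t + Real.sqrt (t ^ 2 - 1)) ^ k := by
        rw [pow_mul, hs, mul_pow]; ring


lemma poly_ii (Q : Polynomial ℝ) (a b : ℝ) :
    IntervalIntegrable (fun x => eval x Q) volume a b :=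
  (Polynomial.continuous Q).intervalIntegrable _ _

lemma poly_ftc (Q : Polynomial ℝ) (a b : ℝ) :
    ∫ x in a..b, eval x (derivative Q) = eval b Q - eval a Q :=
  integral_eq_sub_of_hasDerivAt (fun x _ => Q.hasDerivAt x) (poly_ii _ _ _)

lemma poly_ibp (A B : Polynomial ℝ) :
    ∫ x in (-1:ℝ)..1, eval x (A * derivative B)
      = eval 1 A * eval 1 B - eval (-1) A * eval (-1) B
        - ∫ x in (-1:ℝ)..1, eval x (derivative A * B) := by
  have h := poly_ftc (A * B) (-1) 1
  rw [derivative_mul] at h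
  have hsplit : ∫ x in (-1:ℝ)..1, eval x (derivative A * B + A * derivative B)
      = (∫ x in (-1:ℝ)..1, eval x (derivative A * B))
          + ∫ x in (-1:ℝ)..1, eval x (A * derivative B) := by
    simp only [eval_add]
    exact integral_add (poly_ii _ _ _) (poly_ii _ _ _)
  rw [hsplit, eval_mul, eval_mul] at h
  linarith

lemma poly_ibp_iter : ∀ (j : ℕ) (B : Polynomial ℝ),
    (∀ i < j, eval 1 (Polynomial.derivative^[i] B) = 0
      ∧ eval (-1) (Polynomial.derivative^[i] B) = 0) → ∀ A : Polynomial ℝ,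
    ∫ x in (-1:ℝ)..1, eval x (A * Polynomial.derivative^[j] B)
      = (-1:ℝ) ^ j * ∫ x in (-1:ℝ)..1, eval x (Polynomial.derivative^[j] A * B) := by
  intro j
  induction j with
  | zero => intro B _ A; simp
  | succ n ih =>
    intro B hB A
    have h1 : Polynomial.derivative^[n+1] B = Polynomial.derivative^[n] (derivative B) :=
      Function.iterate_succ_apply _ _ _
    rw [h1, ih (derivative B)
      (fun i hi => by
        rw [← Function.iterate_succ_apply]
        exact hB (i+1) (by omega)) A]
    have h2 := poly_ibp (Polynomial.derivative^[n] A) B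
    have h30 := hB 0 (by omega)
    simp only [Function.iterate_zero, id_eq] at h30
    rw [h2, h30.1, h30.2]
    rw [← Function.iterate_succ_apply' Polynomial.derivative n A]
    ring

lemma orth_lt {j k : ℕ} (h : j < k) :
    ∫ x in (-1:ℝ)..1, eval x (R j * R k) = 0 := by
  have hbd : ∀ i < k, eval 1 (Polynomial.derivative^[i] (H k)) = 0
      ∧ eval (-1) (Polynomial.derivative^[i] (H k)) = 0 :=
    fun i hi => ⟨eval_one_iterate_derivative_H hi, eval_neg_one_iterate_derivative_H hi⟩
  have := poly_ibp_iter k (H k) hbd (R j)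
  rw [show R k = Polynomial.derivative^[k] (H k) from rfl] at *
  rw [this]
  have hz : Polynomial.derivative^[k] (R j) = 0 := by
    rw [R, ← Function.iterate_add_apply]
    exact iterate_derivative_eq_zero (by rw [natDegree_H]; omega)
  rw [hz]
  simp

lemma orth {j k : ℕ} (h : j ≠ k) :
    ∫ x in (-1:ℝ)..1, eval x (R j) * eval x (R k) = 0 := by
  rcases h.lt_or_gt with h' | h'
  · simpa [eval_mul] using orth_lt h'
  · have := orth_lt h'
    simp only [eval_mul] at this
    rw [← this]
    congr 1; ext x; ring

lemma iterate_derivative_H_2k (k : ℕ) :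
    Polynomial.derivative^[2 * k] (H k) = Polynomial.C (((2 * k).factorial : ℕ) : ℝ) := by
  have hd : (Polynomial.derivative^[2 * k] (H k)).natDegree ≤ 0 :=
    le_trans (natDegree_iterate_derivative _ _) (by rw [natDegree_H]; omega)
  rw [Polynomial.eq_C_of_natDegree_le_zero hd, coeff_iterate_derivative]
  have h1 : (H k).coeff (0 + 2 * k) = 1 := by
    rw [zero_add, show 2 * k = (H k).natDegree from (natDegree_H k).symm]
    exact (monic_H k).coeff_natDegree
  rw [h1, zero_add, Nat.descFactorial_self]
  simp

/-- `I k = ∫ (1-x²)^k` -/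
def Ii (k : ℕ) : ℝ := ∫ x in (-1:ℝ)..1, (1 - x ^ 2) ^ k

lemma normR_eq (k : ℕ) :
    ∫ x in (-1:ℝ)..1, (eval x (R k)) ^ 2 = (((2 * k).factorial : ℕ) : ℝ) * Ii k := by
  have hbd : ∀ i < k, eval 1 (Polynomial.derivative^[i] (H k)) = 0
      ∧ eval (-1) (Polynomial.derivative^[i] (H k)) = 0 :=
    fun i hi => ⟨eval_one_iterate_derivative_H hi, eval_neg_one_iterate_derivative_H hi⟩
  have h1 : ∫ x in (-1:ℝ)..1, (eval x (R k)) ^ 2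
      = ∫ x in (-1:ℝ)..1, eval x (R k * Polynomial.derivative^[k] (H k)) := by
    congr 1; ext x; rw [eval_mul, sq]; rfl
  rw [h1, poly_ibp_iter k (H k) hbd (R k)]
  have h2 : Polynomial.derivative^[k] (R k) = Polynomial.C (((2 * k).factorial : ℕ) : ℝ) := by
    rw [R, ← Function.iterate_add_apply, show k + k = 2 * k by ring]
    exact iterate_derivative_H_2k k
  rw [h2]
  have h3 : ∀ x : ℝ, eval x (Polynomial.C (((2 * k).factorial : ℕ) : ℝ) * H k)
      = (((2 * k).factorial : ℕ) : ℝ) * ((x - 1) * (x + 1)) ^ k := by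
    intro x; simp [H, eval_mul, eval_pow, mul_pow]
  calc (-1:ℝ) ^ k * ∫ x in (-1:ℝ)..1, eval x (Polynomial.C (((2 * k).factorial : ℕ) : ℝ) * H k)
      = ∫ x in (-1:ℝ)..1, (-1:ℝ) ^ k * ((((2 * k).factorial : ℕ) : ℝ) * ((x - 1) * (x + 1)) ^ k) := by
        rw [← intervalIntegral.integral_const_mul]
        congr 1; ext x; rw [h3 x]
    _ = ∫ x in (-1:ℝ)..1, (((2 * k).factorial : ℕ) : ℝ) * (1 - x ^ 2) ^ k := by
        congr 1; ext x
        rw [show ((x:ℝ) - 1) * (x + 1) = -(1 - x ^ 2) by ring]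
        have h4 : (-1:ℝ) ^ k * (-(1 - x ^ 2)) ^ k = (1 - x ^ 2) ^ k := by
          rw [← mul_pow]; norm_num
        rw [show (-1:ℝ) ^ k * ((((2 * k).factorial : ℕ) : ℝ) * (-(1 - x ^ 2)) ^ k)
          = (((2 * k).factorial : ℕ) : ℝ) * ((-1:ℝ) ^ k * (-(1 - x ^ 2)) ^ k) from by ring, h4]
    _ = (((2 * k).factorial : ℕ) : ℝ) * Ii k := by
        rw [Ii, intervalIntegral.integral_const_mul]


lemma Ii_zero : Ii 0 = 2 := by
  simp [Ii]; norm_num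

lemma Ii_succ (k : ℕ) : (2 * (k:ℝ) + 3) * Ii (k + 1) = (2 * (k:ℝ) + 2) * Ii k := by
  have hd : ∀ x : ℝ, HasDerivAt (fun x : ℝ => x * (1 - x ^ 2) ^ (k + 1))
      ((2 * (k:ℝ) + 3) * (1 - x ^ 2) ^ (k + 1) - (2 * (k:ℝ) + 2) * (1 - x ^ 2) ^ k) x := by
    intro x
    have h1 : HasDerivAt (fun x : ℝ => 1 - x ^ 2) (-(2 * x ^ 1)) x := by
      simpa using (hasDerivAt_pow 2 x).const_sub 1
    have h2 := (hasDerivAt_id x).mul (h1.pow (k + 1))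
    convert h2 using 1
    · rfl
    · rfl
    · rfl
    have hps : (1 - x ^ 2) ^ (k + 1) = (1 - x ^ 2) ^ k * (1 - x ^ 2) := pow_succ _ _
    simp only [Nat.add_sub_cancel, id_eq, one_mul, Pi.pow_apply]
    rw [hps]
    push_cast
    ring
  have hftc := integral_eq_sub_of_hasDerivAt (f := fun x : ℝ => x * (1 - x ^ 2) ^ (k + 1))
    (a := -1) (b := 1) (fun x _ => hd x) (by apply Continuous.intervalIntegrable; continuity)
  have hz : (fun x : ℝ => x * (1 - x ^ 2) ^ (k + 1)) 1
      - (fun x : ℝ => x * (1 - x ^ 2) ^ (k + 1)) (-1) = 0 := by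
    norm_num
  rw [hz] at hftc
  have hsplit : ∫ x in (-1:ℝ)..1,
      ((2 * (k:ℝ) + 3) * (1 - x ^ 2) ^ (k + 1) - (2 * (k:ℝ) + 2) * (1 - x ^ 2) ^ k)
      = (2 * (k:ℝ) + 3) * Ii (k + 1) - (2 * (k:ℝ) + 2) * Ii k := by
    rw [intervalIntegral.integral_sub (by apply Continuous.intervalIntegrable; continuity)
      (by apply Continuous.intervalIntegrable; continuity),
      intervalIntegral.integral_const_mul, intervalIntegral.integral_const_mul]
    rfl
  rw [hsplit] at hftc
  linarith

lemma Ii_closed (k : ℕ) : Ii k = 2 ^ (2 * k + 1) * ((k.factorial : ℝ)) ^ 2 / ((2 * k + 1).factorial : ℝ) := by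
  induction k with
  | zero => simp [Ii_zero]
  | succ n ih =>
    have hrec := Ii_succ n
    have h3 : (2 * (n:ℝ) + 3) ≠ 0 := by positivity
    have hI : Ii (n + 1) = (2 * (n:ℝ) + 2) * Ii n / (2 * (n:ℝ) + 3) := by
      field_simp
      linarith [hrec]
    rw [hI, ih]
    have hf1 : ((2 * (n + 1) + 1).factorial : ℝ)
        = (2 * (n:ℝ) + 3) * (2 * (n:ℝ) + 2) * ((2 * n + 1).factorial : ℝ) := by
      rw [show 2 * (n + 1) + 1 = (2 * n + 1) + 1 + 1 by ring, Nat.factorial_succ, Nat.factorial_succ]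
      push_cast
      ring
    have hf2 : ((n + 1).factorial : ℝ) = ((n:ℝ) + 1) * (n.factorial : ℝ) := by
      rw [Nat.factorial_succ]; push_cast; ring
    rw [hf1, hf2]
    have hfn : (n.factorial : ℝ) ≠ 0 := Nat.cast_ne_zero.mpr n.factorial_ne_zero
    have hfn2 : ((2 * n + 1).factorial : ℝ) ≠ 0 := Nat.cast_ne_zero.mpr (2 * n + 1).factorial_ne_zero
    field_simp
    ring

/-- squared L² norm of `R k` on `(-1,1)` -/
def Nk (k : ℕ) : ℝ := (((2 * k).factorial : ℕ) : ℝ) * Ii k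

lemma Nk_eq (k : ℕ) : Nk k = 2 ^ (2 * k + 1) * ((k.factorial : ℝ)) ^ 2 / (2 * (k:ℝ) + 1) := by
  rw [Nk, Ii_closed]
  have hf : ((2 * k + 1).factorial : ℝ) = (2 * (k:ℝ) + 1) * (((2 * k).factorial : ℕ) : ℝ) := by
    rw [Nat.factorial_succ]; push_cast; ring
  rw [hf]
  have h1 : (((2 * k).factorial : ℕ) : ℝ) ≠ 0 := Nat.cast_ne_zero.mpr (2 * k).factorial_ne_zero
  have h2 : (2 * (k:ℝ) + 1) ≠ 0 := by positivity
  field_simp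

lemma Nk_pos (k : ℕ) : 0 < Nk k := by
  rw [Nk_eq]
  have : (0:ℝ) < (k.factorial : ℝ) := Nat.cast_pos.mpr k.factorial_pos
  positivity

lemma normR (k : ℕ) : ∫ x in (-1:ℝ)..1, (eval x (R k)) ^ 2 = Nk k := normR_eq k


lemma R_zero : R 0 = 1 := by
  simp [R, H]

lemma exists_expansion : ∀ (p : ℕ) (g : Polynomial ℝ), g.natDegree ≤ p →
    ∃ c : ℕ → ℝ, g = ∑ k ∈ range (p + 1), Polynomial.C (c k) * R k := by
  intro p
  induction p with
  | zero =>
    intro g hg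
    refine ⟨fun _ => g.coeff 0, ?_⟩
    rw [Polynomial.eq_C_of_natDegree_le_zero hg]
    simp [R_zero]
  | succ n ih =>
    intro g hg
    have hdfpos : (0:ℝ) < (((2 * (n+1)).descFactorial (n+1) : ℕ) : ℝ) := by
      have : 0 < (2 * (n+1)).descFactorial (n+1) := by
        rw [Nat.descFactorial_eq_factorial_mul_choose]
        exact Nat.mul_pos (n+1).factorial_pos (Nat.choose_pos (by omega))
      exact_mod_cast this
    set a := g.coeff (n + 1) / (((2 * (n+1)).descFactorial (n+1) : ℕ) : ℝ) with ha
    have hdeg : (g - Polynomial.C a * R (n + 1)).natDegree ≤ n := by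
      rw [Polynomial.natDegree_le_iff_coeff_eq_zero]
      intro m hm
      rw [Polynomial.coeff_sub, Polynomial.coeff_C_mul]
      by_cases hm1 : m = n + 1
      · subst hm1
        rw [coeff_R_self, ha, div_mul_cancel₀ _ (ne_of_gt hdfpos), sub_self]
      · have h2 : n + 1 < m := by omega
        rw [Polynomial.coeff_eq_zero_of_natDegree_lt (lt_of_le_of_lt hg h2),
          Polynomial.coeff_eq_zero_of_natDegree_lt (lt_of_le_of_lt (natDegree_R_le _) h2)]
        ring
    obtain ⟨c, hc⟩ := ih _ hdeg
    refine ⟨fun k => if k = n + 1 then a else c k, ?_⟩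
    rw [Finset.sum_range_succ]
    beta_reduce
    rw [if_pos rfl]
    have hss : ∑ k ∈ range (n + 1), Polynomial.C (if k = n + 1 then a else c k) * R k
        = ∑ k ∈ range (n + 1), Polynomial.C (c k) * R k := by
      refine sum_congr rfl fun k hk => ?_
      rw [if_neg (by simp only [Finset.mem_range] at hk; omega)]
    rw [hss, ← hc]
    ring

lemma integral_sq_eq (p : ℕ) (g : Polynomial ℝ) (c : ℕ → ℝ)
    (hc : g = ∑ k ∈ range (p + 1), Polynomial.C (c k) * R k) :
    ∫ x in (-1:ℝ)..1, (eval x g) ^ 2 = ∑ k ∈ range (p + 1), (c k) ^ 2 * Nk k := by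
  have he : ∀ x : ℝ, eval x g = ∑ k ∈ range (p + 1), c k * eval x (R k) := by
    intro x
    rw [hc, eval_finset_sum]
    exact sum_congr rfl fun k _ => by rw [eval_mul, eval_C]
  have hint : ∀ (j k : ℕ), IntervalIntegrable
      (fun x => c k * eval x (R k) * (c j * eval x (R j))) volume (-1:ℝ) 1 := by
    intro j k
    apply Continuous.intervalIntegrable
    exact ((continuous_const.mul (Polynomial.continuous _)).mul
      (continuous_const.mul (Polynomial.continuous _)))
  calc ∫ x in (-1:ℝ)..1, (eval x g) ^ 2
      = ∫ x in (-1:ℝ)..1, ∑ k ∈ range (p + 1), ∑ j ∈ range (p + 1),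
          (c k * eval x (R k)) * (c j * eval x (R j)) := by
        congr 1; ext x
        rw [he x, sq, Finset.sum_mul_sum]
    _ = ∑ k ∈ range (p + 1), ∫ x in (-1:ℝ)..1, ∑ j ∈ range (p + 1),
          (c k * eval x (R k)) * (c j * eval x (R j)) := by
        apply intervalIntegral.integral_finset_sum
        intro k _
        apply Continuous.intervalIntegrable
        exact continuous_finset_sum _ (fun j _ =>
          (continuous_const.mul (Polynomial.continuous _)).mul
            (continuous_const.mul (Polynomial.continuous _)))
    _ = ∑ k ∈ range (p + 1), ∑ j ∈ range (p + 1), ∫ x in (-1:ℝ)..1,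
          (c k * eval x (R k)) * (c j * eval x (R j)) := by
        refine sum_congr rfl fun k _ => ?_
        apply intervalIntegral.integral_finset_sum
        intro j _
        exact hint j k
    _ = ∑ k ∈ range (p + 1), (c k) ^ 2 * Nk k := by
        refine sum_congr rfl fun k hk => ?_
        rw [Finset.sum_eq_single k]
        · have : ∀ x : ℝ, (c k * eval x (R k)) * (c k * eval x (R k))
              = c k ^ 2 * (eval x (R k)) ^ 2 := fun x => by ring
          simp_rw [this]
          rw [intervalIntegral.integral_const_mul, normR]
        · intro j hj hjk
          have : ∀ x : ℝ, (c k * eval x (R k)) * (c j * eval x (R j))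
              = (c k * c j) * (eval x (R k) * eval x (R j)) := fun x => by ring
          simp_rw [this]
          rw [intervalIntegral.integral_const_mul, orth (Ne.symm hjk)]
          ring
        · intro hkk
          exact absurd hk hkk

/-- outer conjugate point function -/
def uu (x : ℝ) : ℝ := x + Real.sqrt (x ^ 2 - 1)

lemma uu_one_le {t : ℝ} (ht : 1 ≤ t) : 1 ≤ uu t := by
  have := Real.sqrt_nonneg (t ^ 2 - 1)
  rw [uu]; linarith

/-- Christoffel-type kernel bound -/
def Kp (p : ℕ) (x : ℝ) : ℝ := ∑ k ∈ range (p + 1), ((2 * (k:ℝ) + 1) / 2) * (uu x) ^ (2 * k)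

lemma sq_eval_R_le (k : ℕ) {t : ℝ} (ht : 1 ≤ t) :
    (eval t (R k)) ^ 2 ≤ Nk k * (((2 * (k:ℝ) + 1) / 2) * (uu t) ^ (2 * k)) := by
  have h1 := eval_R_le k ht
  have h0 := eval_R_nonneg k ht
  have hu : 0 ≤ uu t := le_trans zero_le_one (uu_one_le ht)
  have h2 : (eval t (R k)) ^ 2 ≤ ((k.factorial : ℝ) * 2 ^ k * (uu t) ^ k) ^ 2 := by
    apply pow_le_pow_left₀ h0
    exact h1
  refine le_trans h2 (le_of_eq ?_)
  rw [Nk_eq]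
  have hk : (2 * (k:ℝ) + 1) ≠ 0 := by positivity
  rw [pow_mul]
  field_simp
  ring

lemma pointwise_bound (p : ℕ) (g : Polynomial ℝ) (c : ℕ → ℝ)
    (hc : g = ∑ k ∈ range (p + 1), Polynomial.C (c k) * R k) {t : ℝ} (ht : 1 ≤ t) :
    (eval t g) ^ 2 ≤ (∑ k ∈ range (p + 1), (c k) ^ 2 * Nk k) * Kp p t := by
  have he : eval t g = ∑ k ∈ range (p + 1),
      (c k * Real.sqrt (Nk k)) * (eval t (R k) / Real.sqrt (Nk k)) := by
    rw [hc, eval_finset_sum]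
    refine sum_congr rfl fun k _ => ?_
    have hs : Real.sqrt (Nk k) ≠ 0 := by
      exact ne_of_gt (Real.sqrt_pos.mpr (Nk_pos k))
    rw [eval_mul, eval_C]
    field_simp
  rw [he]
  refine le_trans (Finset.sum_mul_sq_le_sq_mul_sq _ _ _) ?_
  have hA : ∑ k ∈ range (p + 1), (c k * Real.sqrt (Nk k)) ^ 2
      = ∑ k ∈ range (p + 1), (c k) ^ 2 * Nk k := by
    refine sum_congr rfl fun k _ => ?_
    rw [mul_pow, Real.sq_sqrt (Nk_pos k).le]
  have hB : ∑ k ∈ range (p + 1), (eval t (R k) / Real.sqrt (Nk k)) ^ 2 ≤ Kp p t := by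
    rw [Kp]
    refine Finset.sum_le_sum fun k _ => ?_
    rw [div_pow, Real.sq_sqrt (Nk_pos k).le, div_le_iff₀ (Nk_pos k)]
    calc (eval t (R k)) ^ 2 ≤ Nk k * (((2 * (k:ℝ) + 1) / 2) * (uu t) ^ (2 * k)) :=
          sq_eval_R_le k ht
      _ = ((2 * (k:ℝ) + 1) / 2) * (uu t) ^ (2 * k) * Nk k := by ring
  rw [hA]
  refine mul_le_mul_of_nonneg_left hB ?_
  exact Finset.sum_nonneg fun k _ => mul_nonneg (sq_nonneg _) (Nk_pos k).le


lemma key_ineq (p : ℕ) {v : ℝ} (hv : 1 ≤ v) :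
    (v ^ 2 - 1) * ∑ k ∈ range (p + 1), (2 * (k:ℝ) + 1) * v ^ (2 * k)
      ≤ (2 * (p:ℝ) + 1) * v ^ (2 * p + 2) := by
  induction p with
  | zero =>
    rw [Finset.sum_range_one]
    push_cast
    nlinarith [sq_nonneg v]
  | succ n ih =>
    rw [Finset.sum_range_succ, mul_add]
    have he1 : 2 * (n + 1) = 2 * n + 2 := by ring
    rw [he1]
    have hv0 : 0 < v := lt_of_lt_of_le zero_lt_one hv
    have hpow : (0:ℝ) ≤ v ^ (2 * n + 2) := by positivity
    have h2 : (v ^ 2 - 1) * ((2 * ((n:ℝ) + 1) + 1) * v ^ (2 * n + 2))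
        = (2 * (n:ℝ) + 3) * v ^ (2 * n + 2 + 2) - (2 * (n:ℝ) + 3) * v ^ (2 * n + 2) := by
      rw [pow_add]
      ring
    have h3 : (2 * (n:ℝ) + 1) * v ^ (2 * n + 2) ≤ (2 * (n:ℝ) + 3) * v ^ (2 * n + 2) := by
      nlinarith [hpow]
    push_cast
    push_cast at ih
    nlinarith [ih, h2, h3]

lemma continuous_uu : Continuous uu := by
  unfold uu
  exact continuous_id.add (Real.continuous_sqrt.comp (by continuity))

lemma continuous_Kp (p : ℕ) : Continuous (Kp p) := by
  unfold Kp
  exact continuous_finset_sum _ (fun k _ => continuous_const.mul (continuous_uu.pow _))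

lemma hasDerivAt_uu {x : ℝ} (hx : 1 < x) :
    HasDerivAt uu (1 + x / Real.sqrt (x ^ 2 - 1)) x := by
  have h1 : (0:ℝ) < x ^ 2 - 1 := by nlinarith
  have h2 : HasDerivAt (fun x : ℝ => x ^ 2 - 1) (2 * x) x := by
    simpa using (hasDerivAt_pow 2 x).sub_const 1
  have h3 := (Real.hasDerivAt_sqrt h1.ne').comp x h2
  have h4 := (hasDerivAt_id x).add h3
  have hs : Real.sqrt (x ^ 2 - 1) ≠ 0 := by
    exact ne_of_gt (Real.sqrt_pos.mpr h1)
  convert h4 using 1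
  · rfl
  · rfl
  · rfl
  field_simp

lemma integral_Kp_le (p : ℕ) {lam : ℝ} (hlam : 1 < lam) :
    ∫ x in (1:ℝ)..lam, Kp p x ≤ ((uu lam) ^ (2 * p + 1) - 1) / 4 := by
  set Pf : ℝ → ℝ := fun y => ∫ x in (1:ℝ)..y, Kp p x with hPf
  have hP : ∀ y : ℝ, HasDerivAt Pf (Kp p y) y := by
    intro y
    exact intervalIntegral.integral_hasDerivAt_right
      ((continuous_Kp p).intervalIntegrable _ _)
      ((continuous_Kp p).stronglyMeasurable.stronglyMeasurableAtFilter)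
      (continuous_Kp p).continuousAt
  have hPcont : Continuous Pf := by
    rw [continuous_iff_continuousAt]
    exact fun y => (hP y).continuousAt
  set F : ℝ → ℝ := fun y => (uu y) ^ (2 * p + 1) / 4 - Pf y with hF
  have hFcont : Continuous F := ((continuous_uu.pow _).div_const 4).sub hPcont
  have hFderiv : ∀ x : ℝ, x ∈ Set.Ioo 1 lam → HasDerivAt F
      ((((2 * p + 1 : ℕ)) : ℝ) * uu x ^ (2 * p + 1 - 1) * (1 + x / Real.sqrt (x ^ 2 - 1)) / 4
        - Kp p x) x := by
    intro x hx
    exact ((((hasDerivAt_uu hx.1).pow (2 * p + 1)).div_const 4).sub (hP x))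
  have hFnonneg : ∀ x : ℝ, x ∈ Set.Ioo 1 lam →
      0 ≤ (((2 * p + 1 : ℕ)) : ℝ) * uu x ^ (2 * p + 1 - 1) * (1 + x / Real.sqrt (x ^ 2 - 1)) / 4
        - Kp p x := by
    intro x hx
    obtain ⟨hx1, _⟩ := hx
    set s : ℝ := Real.sqrt (x ^ 2 - 1) with hsdef
    have h1 : (0:ℝ) < x ^ 2 - 1 := by nlinarith
    have hs : 0 < s := Real.sqrt_pos.mpr h1
    have hs2 : s ^ 2 = x ^ 2 - 1 := Real.sq_sqrt h1.le
    set u : ℝ := uu x with hudef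
    have huu : u = x + s := rfl
    have hu1 : 1 ≤ u := uu_one_le hx1.le
    have hu0 : 0 < u := lt_of_lt_of_le zero_lt_one hu1
    have hrel : u ^ 2 - 1 = 2 * s * u := by
      rw [huu]; linear_combination -hs2
    have hKp2 : 2 * Kp p x = ∑ k ∈ range (p + 1), (2 * (k:ℝ) + 1) * u ^ (2 * k) := by
      rw [Kp, Finset.mul_sum]
      exact sum_congr rfl fun k _ => by rw [← hudef]; ring
    have hkey := key_ineq p hu1
    rw [hrel, ← hKp2] at hkey
    have hu2 : u ^ (2 * p + 2) = u ^ (2 * p + 1) * u := by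
      rw [show 2 * p + 2 = (2 * p + 1) + 1 by ring, pow_succ]
    rw [hu2] at hkey
    have h4s : 4 * s * Kp p x ≤ (2 * (p:ℝ) + 1) * u ^ (2 * p + 1) := by
      apply le_of_mul_le_mul_right _ hu0
      calc 4 * s * Kp p x * u = 2 * s * u * (2 * Kp p x) := by ring
        _ ≤ (2 * (p:ℝ) + 1) * (u ^ (2 * p + 1) * u) := hkey
        _ = (2 * (p:ℝ) + 1) * u ^ (2 * p + 1) * u := by ring
    have h1xs : 1 + x / s = u / s := by
      rw [huu]; field_simp; ring
    have hps : 2 * p + 1 - 1 = 2 * p := by omega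
    rw [hps, h1xs]
    have heq : (((2 * p + 1 : ℕ)) : ℝ) * u ^ (2 * p) * (u / s) / 4
        = ((2 * (p:ℝ) + 1) * u ^ (2 * p + 1)) / (4 * s) := by
      rw [pow_succ]
      push_cast
      field_simp
    rw [sub_nonneg, heq, le_div_iff₀ (by positivity)]
    linarith [h4s]
  have hmono : MonotoneOn F (Set.Icc 1 lam) := by
    apply monotoneOn_of_deriv_nonneg (convex_Icc _ _) hFcont.continuousOn
    · intro x hx
      rw [interior_Icc] at hx
      exact ((hFderiv x hx).differentiableAt).differentiableWithinAt
    · intro x hx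
      rw [interior_Icc] at hx
      rw [(hFderiv x hx).deriv]
      exact hFnonneg x hx
  have hF1 : F 1 ≤ F lam :=
    hmono (Set.left_mem_Icc.mpr hlam.le) (Set.right_mem_Icc.mpr hlam.le) hlam.le
  have hPf1 : Pf 1 = 0 := intervalIntegral.integral_same
  have huu1 : uu 1 = 1 := by
    rw [uu]; norm_num
  rw [hF, hPf] at hF1
  simp only [hPf1, huu1, one_pow] at hF1
  linarith [hF1]


lemma main_right (p : ℕ) {lam : ℝ} (hlam : 1 < lam) (g : Polynomial ℝ) (hg : g.natDegree ≤ p) :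
    ∫ x in (1:ℝ)..lam, (g.eval x) ^ 2
      ≤ ((uu lam) ^ (2 * p + 1) - 1) / 4 * ∫ x in (-1:ℝ)..1, (g.eval x) ^ 2 := by
  obtain ⟨c, hc⟩ := exists_expansion p g hg
  have hB : ∫ x in (-1:ℝ)..1, (g.eval x) ^ 2 = ∑ k ∈ range (p + 1), (c k) ^ 2 * Nk k :=
    integral_sq_eq p g c hc
  have hBnn : 0 ≤ ∫ x in (-1:ℝ)..1, (g.eval x) ^ 2 := by
    apply intervalIntegral.integral_nonneg (by norm_num)
    intro x _
    positivity
  have hgc : Continuous fun x => (g.eval x) ^ 2 := (Polynomial.continuous g).pow 2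
  calc ∫ x in (1:ℝ)..lam, (g.eval x) ^ 2
      ≤ ∫ x in (1:ℝ)..lam, Kp p x * ∫ y in (-1:ℝ)..1, (g.eval y) ^ 2 := by
        apply intervalIntegral.integral_mono_on hlam.le (hgc.intervalIntegrable _ _)
          (((continuous_Kp p).mul continuous_const).intervalIntegrable _ _)
        intro t ht
        have hpb := pointwise_bound p g c hc ht.1
        rw [hB]
        calc (g.eval t) ^ 2 ≤ (∑ k ∈ range (p + 1), (c k) ^ 2 * Nk k) * Kp p t := hpb
          _ = Kp p t * ∑ k ∈ range (p + 1), (c k) ^ 2 * Nk k := by ring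
    _ = (∫ x in (1:ℝ)..lam, Kp p x) * ∫ y in (-1:ℝ)..1, (g.eval y) ^ 2 :=
        intervalIntegral.integral_mul_const _ _
    _ ≤ ((uu lam) ^ (2 * p + 1) - 1) / 4 * ∫ x in (-1:ℝ)..1, (g.eval x) ^ 2 :=
        mul_le_mul_of_nonneg_right (integral_Kp_le p hlam) hBnn

end DIE

open DIE in
/-- One-dimensional polynomial domain inverse estimate:
for `g` a real polynomial of degree at most `p` and `λ > 1`,
`∫_{I_λ \ I} g² ≤ (1/2)·[(λ + √(λ²−1))^{2p+1} − 1]·∫_I g²` where `I = (−1,1)`, `I_λ = (−λ,λ)`. -/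
theorem one_dim_domain_inverse_estimate (p : ℕ) (lam : ℝ) (hlam : 1 < lam)
    (g : Polynomial ℝ) (hg : g.natDegree ≤ p) :
    (∫ x in Set.Ioo (-lam) lam \ Set.Ioo (-1 : ℝ) 1, (g.eval x) ^ 2) ≤
      (1 / 2) * ((lam + Real.sqrt (lam ^ 2 - 1)) ^ (2 * p + 1) - 1) *
        ∫ x in Set.Ioo (-1 : ℝ) 1, (g.eval x) ^ 2 := by
  have hgc : Continuous fun x : ℝ => (g.eval x) ^ 2 := (Polynomial.continuous g).pow 2
  have hset : Set.Ioo (-lam) lam \ Set.Ioo (-1:ℝ) 1 = Set.Ioc (-lam) (-1) ∪ Set.Ico 1 lam := by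
    ext x
    simp only [Set.mem_diff, Set.mem_Ioo, Set.mem_union, Set.mem_Ioc, Set.mem_Ico, not_and,
      not_lt]
    constructor
    · rintro ⟨⟨h1, h2⟩, h3⟩
      by_cases hx : x ≤ -1
      · exact Or.inl ⟨h1, hx⟩
      · push_neg at hx
        exact Or.inr ⟨h3 hx, h2⟩
    · rintro (⟨h1, h2⟩ | ⟨h1, h2⟩)
      · exact ⟨⟨h1, by linarith⟩, fun h => by linarith⟩
      · exact ⟨⟨by linarith, h2⟩, fun h => h1⟩
  have hdisj : Disjoint (Set.Ioc (-lam) (-1:ℝ)) (Set.Ico 1 lam) := by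
    rw [Set.disjoint_left]
    intro x hx1 hx2
    simp only [Set.mem_Ioc, Set.mem_Ico] at hx1 hx2
    linarith [hx1.2, hx2.1]
  rw [hset, MeasureTheory.setIntegral_union hdisj measurableSet_Ico
    (hgc.integrableOn_Ioc) (hgc.integrableOn_Icc.mono_set Set.Ico_subset_Icc_self)]
  set g2 : Polynomial ℝ := g.comp (-Polynomial.X) with hg2def
  have he2 : ∀ x : ℝ, g2.eval x = g.eval (-x) := by
    intro x
    rw [hg2def, Polynomial.eval_comp, Polynomial.eval_neg, Polynomial.eval_X]
  have hg2 : g2.natDegree ≤ p := by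
    rw [hg2def, Polynomial.natDegree_comp]
    simpa using hg
  -- left piece
  have hleft : ∫ x in Set.Ioc (-lam) (-1:ℝ), (g.eval x) ^ 2
      = ∫ x in (1:ℝ)..lam, (g2.eval x) ^ 2 := by
    rw [← intervalIntegral.integral_of_le (by linarith : -lam ≤ -1)]
    have := intervalIntegral.integral_comp_neg (a := (1:ℝ)) (b := lam)
      (f := fun t => (g.eval t) ^ 2)
    rw [← this]
    congr 1
    ext x
    rw [he2 x]
  -- right piece
  have hright : ∫ x in Set.Ico (1:ℝ) lam, (g.eval x) ^ 2
      = ∫ x in (1:ℝ)..lam, (g.eval x) ^ 2 := by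
    rw [MeasureTheory.integral_Ico_eq_integral_Ioo, ← MeasureTheory.integral_Ioc_eq_integral_Ioo,
      ← intervalIntegral.integral_of_le hlam.le]
  -- base integrals
  have hbase : ∫ x in Set.Ioo (-1:ℝ) 1, (g.eval x) ^ 2
      = ∫ x in (-1:ℝ)..1, (g.eval x) ^ 2 := by
    rw [intervalIntegral.integral_of_le (by norm_num : (-1:ℝ) ≤ 1),
      MeasureTheory.integral_Ioc_eq_integral_Ioo]
  have hbase2 : ∫ x in (-1:ℝ)..1, (g2.eval x) ^ 2 = ∫ x in (-1:ℝ)..1, (g.eval x) ^ 2 := by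
    have := intervalIntegral.integral_comp_neg (a := (-1:ℝ)) (b := 1)
      (f := fun t => (g.eval t) ^ 2)
    simp only [neg_neg] at this
    rw [← this]
    congr 1
    ext x
    rw [he2 x]
  have h1 := main_right p hlam g hg
  have h2 := main_right p hlam g2 hg2
  rw [hbase2] at h2
  have huul : uu lam = lam + Real.sqrt (lam ^ 2 - 1) := rfl
  rw [hleft, hright, hbase, ← huul]
  linarith [h1, h2]
end
end

section
/- Let Δ be the (closed) triangle in ℝ² with vertices A = (a₁,a₂), B = (0,0), C = (c₁,0), where a₂ > 0 and c₁ > 0. Let δ ∈ (0, a₂) and set Δ_δ = {x ∈ Δ : dist(x, L) > δ}, where L is the line through B and C (i.e., the x-axis, so Δ_δ = {x ∈ Δ : x₂ > δ}). Then for every nonnegative integer p and every real polynomial v in two variables of degree at most p in each variable, ‖v‖_{L²(Δ)} ≤ T((1 + δ a₂⁻¹)/(1 − δ a₂⁻¹))^{2p+3/2} ‖v‖_{L²(Δ_δ)}, where T(t) = t + √(t²−1) for t ≥ 1. -/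
open MeasureTheory
/-- `T(t) = t + √(t²−1)` for `t ≥ 1`. -/
noncomputable def Tgrow (t : ℝ) : ℝ := t + Real.sqrt (t ^ 2 - 1)

section Aux
open Polynomial Polynomial.Chebyshev Real Set MeasureTheory

def TriSet (a1 a2 c1 : ℝ) : Set (ℝ × ℝ) :=
  {x : ℝ × ℝ | 0 ≤ x.2 ∧ x.2 ≤ a2 ∧ a1 * x.2 ≤ a2 * x.1 ∧ a2 * x.1 + (c1 - a1) * x.2 ≤ c1 * a2}

variable {a1 a2 c1 : ℝ}



section basics
variable {y : ℝ} (hy : 1 ≤ y)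
include hy

lemma Tgrow_ge_one : 1 ≤ Tgrow y := by
  have : 0 ≤ Real.sqrt (y^2-1) := Real.sqrt_nonneg _
  unfold Tgrow; linarith

lemma Tgrow_pos : 0 < Tgrow y := lt_of_lt_of_le one_pos (Tgrow_ge_one hy)

lemma Tgrow_mul : Tgrow y * (y - Real.sqrt (y^2-1)) = 1 := by
  have h1 : (0:ℝ) ≤ y^2 - 1 := by nlinarith
  have h2 : Real.sqrt (y^2-1) ^ 2 = y^2 - 1 := Real.sq_sqrt h1
  unfold Tgrow; nlinarith

lemma Tgrow_inv : (Tgrow y)⁻¹ = y - Real.sqrt (y^2-1) :=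
  (eq_inv_of_mul_eq_one_right (Tgrow_mul hy)).symm

lemma Tgrow_add_inv : Tgrow y + (Tgrow y)⁻¹ = 2 * y := by
  rw [Tgrow_inv hy]; unfold Tgrow; ring

end basics

lemma teval {y : ℝ} (hy : 1 ≤ y) : ∀ n : ℕ,
    (T ℝ n).eval y = ((Tgrow y)^n + ((Tgrow y)⁻¹)^n)/2 ∧
    (T ℝ (n+1)).eval y = ((Tgrow y)^(n+1) + ((Tgrow y)⁻¹)^(n+1))/2 := by
  have hz := Tgrow_pos hy
  have hzi : Tgrow y * (Tgrow y)⁻¹ = 1 := mul_inv_cancel₀ (ne_of_gt hz)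
  have hsum := Tgrow_add_inv hy
  intro n
  induction n with
  | zero =>
    constructor
    · simp [T_zero]
    · push_cast; rw [T_one]; simp only [eval_X]; rw [pow_one, pow_one]; linarith
  | succ k ih =>
    refine ⟨ih.2, ?_⟩
    have h : ((k:ℤ)+1+1) = ((k:ℤ)+2) := by ring
    push_cast
    rw [h, T_add_two]
    simp only [eval_sub, eval_mul, eval_ofNat, eval_X]
    push_cast at ih
    rw [ih.1, ih.2]
    have e1 : (Tgrow y)^(k+1+1) + ((Tgrow y)⁻¹)^(k+1+1)
        = (Tgrow y + (Tgrow y)⁻¹) * ((Tgrow y)^(k+1) + ((Tgrow y)⁻¹)^(k+1))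
          - ((Tgrow y)^k + ((Tgrow y)⁻¹)^k) := by
      have : ∀ m : ℕ, (Tgrow y)^m * ((Tgrow y)⁻¹)^m = 1 := by
        intro m; rw [← mul_pow, hzi, one_pow]
      ring_nf
      nlinarith [this k, this (k+1), pow_pos hz k, pow_pos (inv_pos.2 hz) k]
    rw [e1, ← hsum]; ring


lemma tdeg : ∀ n : ℕ, (T ℝ n).natDegree ≤ n ∧ (T ℝ (n+1)).natDegree ≤ n+1 := by
  intro n
  induction n with
  | zero => constructor <;> simp [T_zero, T_one]
  | succ k ih =>
    refine ⟨ih.2, ?_⟩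
    have h : ((k:ℤ)+1+1) = ((k:ℤ)+2) := by ring
    push_cast
    rw [h, T_add_two]
    refine le_trans (natDegree_sub_le _ _) ?_
    simp only [sup_le_iff]
    constructor
    · refine le_trans (natDegree_mul_le) ?_
      have h2 : (2 * X : ℝ[X]).natDegree ≤ 1 := by
        refine le_trans (natDegree_mul_le) ?_; simp
      have := ih.2
      push_cast at this ⊢
      omega
    · have := ih.1; omega

lemma tdeg' (n : ℕ) : (T ℝ n).natDegree ≤ n := (tdeg n).1

lemma teval1 {y : ℝ} (hy : 1 ≤ y) (n : ℕ) :
    (T ℝ n).eval y = ((Tgrow y)^n + ((Tgrow y)⁻¹)^n)/2 := (teval hy n).1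

lemma tle {y : ℝ} (hy : 1 ≤ y) (n : ℕ) : (T ℝ n).eval y ≤ (Tgrow y)^n := by
  rw [(teval hy n).1]
  have h1 : (Tgrow y)⁻¹ ≤ Tgrow y := by
    have := Tgrow_ge_one hy
    have : (Tgrow y)⁻¹ ≤ 1 := inv_le_one_of_one_le₀ this
    linarith [Tgrow_ge_one hy]
  have : ((Tgrow y)⁻¹)^n ≤ (Tgrow y)^n := pow_le_pow_left₀ (le_of_lt (inv_pos.2 (Tgrow_pos hy))) h1 n
  linarith



lemma td_pos {y : ℝ} (hy : 1 ≤ y) (n : ℕ) : 0 < (T ℝ n).eval y := by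
  rw [teval1 hy]
  have h1 : (0:ℝ) < (Tgrow y)^n := pow_pos (Tgrow_pos hy) n
  have h2 : (0:ℝ) < ((Tgrow y)⁻¹)^n := pow_pos (inv_pos.2 (Tgrow_pos hy)) n
  linarith

lemma growth_aux (P : ℝ[X]) (d : ℕ) (hd1 : 1 ≤ d) (hP : P.natDegree ≤ d) (M y : ℝ)
    (hM : ∀ x ∈ Icc (-1:ℝ) 1, |P.eval x| ≤ M) (hy : 1 < y) :
    P.eval y ≤ M * (T ℝ d).eval y := by
  by_contra hcon
  push_neg at hcon
  have hTy : 0 < (T ℝ d).eval y := td_pos hy.le d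
  set c : ℝ := P.eval y / (T ℝ d).eval y with hc
  have hM0 : 0 ≤ M := le_trans (abs_nonneg _) (hM 1 ⟨by norm_num, le_refl _⟩)
  have hcM : M < c := by
    rw [hc, lt_div_iff₀ hTy]; exact hcon
  set R : ℝ[X] := C c * T ℝ d - P with hR
  have hRy : R.eval y = 0 := by
    simp only [hR, eval_sub, eval_mul, eval_C, hc]
    field_simp; ring
  have hRdeg : R.natDegree ≤ d := by
    refine le_trans (natDegree_sub_le _ _) ?_
    simp only [sup_le_iff]
    exact ⟨le_trans (natDegree_mul_le) (by simpa using tdeg' d), hP⟩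
  have hdR : (0:ℝ) < (d:ℝ) := by exact_mod_cast hd1
  -- nodes
  set x : ℕ → ℝ := fun k => Real.cos (k * π / d) with hx
  have hxIcc : ∀ k, x k ∈ Icc (-1:ℝ) 1 := fun k => ⟨Real.neg_one_le_cos _, Real.cos_le_one _⟩
  have hangle : ∀ k : ℕ, k ≤ d → (k:ℝ) * π / d ∈ Icc 0 π := by
    intro k hk
    constructor
    · positivity
    · rw [div_le_iff₀ hdR]
      have : (k:ℝ) ≤ d := by exact_mod_cast hk
      nlinarith [Real.pi_pos]
  have hxanti : ∀ i j : ℕ, i ≤ j → j ≤ d → x j ≤ x i := by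
    intro i j hij hjd
    apply Real.cos_le_cos_of_nonneg_of_le_pi (hangle i (le_trans hij hjd)).1
      (hangle j hjd).2
    have hij' : (i:ℝ) ≤ j := by exact_mod_cast hij
    have hpi := Real.pi_pos
    rw [div_le_div_iff_of_pos_right hdR]
    nlinarith
  have hxstrict : ∀ k : ℕ, k < d → x (k+1) < x k := by
    intro k hk
    apply Real.cos_lt_cos_of_nonneg_of_le_pi (hangle k (le_of_lt hk)).1
      (hangle (k+1) hk).2
    have : (k:ℝ) < (k:ℝ)+1 := by linarith
    rw [div_lt_div_iff_of_pos_right hdR]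
    push_cast
    nlinarith [Real.pi_pos]
  -- values at nodes
  have hxval : ∀ k : ℕ, R.eval (x k) = c * (-1:ℝ)^k - P.eval (x k) := by
    intro k
    simp only [hR, eval_sub, eval_mul, eval_C, hx]
    congr 1
    congr 1
    rw [T_real_cos ((k:ℝ) * π / d) (d:ℤ)]
    have : ((d:ℤ):ℝ) * ((k:ℝ) * π / d) = (k:ℝ) * π := by
      push_cast; field_simp
    rw [this]
    simpa using Real.cos_add_nat_mul_pi 0 k
  have hsign : ∀ k : ℕ, (Even k → 0 < R.eval (x k)) ∧ (Odd k → R.eval (x k) < 0) := by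
    intro k
    have hPk : |P.eval (x k)| ≤ M := hM _ (hxIcc k)
    rw [abs_le] at hPk
    constructor
    · intro he; rw [hxval k, he.neg_one_pow]; linarith
    · intro ho; rw [hxval k, ho.neg_one_pow]; linarith
  -- roots between nodes
  have hroot : ∀ k : ℕ, k < d → ∃ t ∈ Ioo (x (k+1)) (x k), R.eval t = 0 := by
    intro k hk
    have hcont : ContinuousOn (fun t => R.eval t) (Icc (x (k+1)) (x k)) :=
      (R.continuous_aeval.continuousOn)
    rcases Nat.even_or_odd k with he | ho
    · have h1 : R.eval (x (k+1)) < 0 := (hsign (k+1)).2 (Even.add_one he)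
      have h2 : 0 < R.eval (x k) := (hsign k).1 he
      have := intermediate_value_Ioo (le_of_lt (hxstrict k hk)) hcont
      rcases this ⟨h1, h2⟩ with ⟨t, ht, htv⟩
      exact ⟨t, ht, htv⟩
    · have h1 : 0 < R.eval (x (k+1)) := (hsign (k+1)).1 (Odd.add_one ho)
      have h2 : R.eval (x k) < 0 := (hsign k).2 ho
      have := intermediate_value_Ioo' (le_of_lt (hxstrict k hk)) hcont
      rcases this ⟨h2, h1⟩ with ⟨t, ht, htv⟩
      exact ⟨t, ht, htv⟩
  choose t ht using hroot
  -- the injective family of d+1 roots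
  set f : Fin (d+1) → ℝ := fun j => if h : (j:ℕ) < d then t j h else y with hf
  have hfroot : ∀ j : Fin (d+1), R.eval (f j) = 0 := by
    intro j
    by_cases h : (j:ℕ) < d
    · simp only [hf, dif_pos h]; exact (ht j h).2
    · simp only [hf, dif_neg h]; exact hRy
  have hflt : ∀ h1 : Fin (d+1), ∀ h2 : Fin (d+1), h1 < h2 → f h1 ≠ f h2 := by
    intro i j hij
    have hx0 : x 0 = 1 := by simp [hx]
    by_cases hjd : (j:ℕ) < d
    · have hid : (i:ℕ) < d := lt_trans hij hjd
      simp only [hf, dif_pos hjd, dif_pos hid]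
      have h1 : t j hjd < x j := (ht j hjd).1.2
      have h2 : x (i+1) < t i hid := (ht i hid).1.1
      have h3 : x j ≤ x (i+1) := hxanti _ _ hij (le_of_lt hjd)
      exact ne_of_gt (by linarith)
    · have hid : (i:ℕ) < d := by
        have := j.isLt; omega
      simp only [hf, dif_neg hjd, dif_pos hid]
      have h1 : t i hid < x i := (ht i hid).1.2
      have h2 : x i ≤ x 0 := hxanti 0 i (Nat.zero_le _) (le_of_lt hid)
      rw [hx0] at h2
      exact ne_of_lt (by linarith)
  have hfinj : Function.Injective f := by
    intro i j hij
    rcases lt_trichotomy i j with h | h | h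
    · exact absurd hij (hflt i j h)
    · exact h
    · exact absurd hij.symm (hflt j i h)
  have hR0 : R = 0 := by
    apply Polynomial.eq_zero_of_natDegree_lt_card_of_eval_eq_zero R hfinj hfroot
    simpa using Nat.lt_succ_of_le hRdeg
  have : R.eval (x 0) = 0 := by rw [hR0]; simp
  rw [hxval 0] at this
  have hP0 : |P.eval (x 0)| ≤ M := hM _ (hxIcc 0)
  rw [abs_le] at hP0
  simp at this
  linarith

lemma growth (P : ℝ[X]) (d : ℕ) (hP : P.natDegree ≤ d) (M y : ℝ)
    (hM : ∀ x ∈ Icc (-1:ℝ) 1, |P.eval x| ≤ M) (hy : 1 ≤ y) :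
    |P.eval y| ≤ M * (Tgrow y)^d := by
  have hM0 : 0 ≤ M := le_trans (abs_nonneg _) (hM 1 ⟨by norm_num, le_refl _⟩)
  have hz1 : 1 ≤ Tgrow y := Tgrow_ge_one hy
  have hzd : 1 ≤ (Tgrow y)^d := one_le_pow₀ hz1
  rcases eq_or_lt_of_le hy with h1 | h1
  · rcases h1.symm
    have := hM 1 ⟨by norm_num, le_refl _⟩
    nlinarith
  rcases Nat.eq_zero_or_pos d with hd | hd
  · subst hd
    simp only [Nat.le_zero] at hP
    rcases Polynomial.natDegree_eq_zero.1 hP with ⟨a, rfl⟩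
    simpa using hM 1 ⟨by norm_num, le_refl _⟩
  have hup : P.eval y ≤ M * (T ℝ d).eval y := growth_aux P d hd hP M y hM h1
  have hdown : (-P).eval y ≤ M * (T ℝ d).eval y := by
    apply growth_aux (-P) d hd (by simpa using hP) M y ?_ h1
    intro z hz; rw [eval_neg, abs_neg]; exact hM z hz
  rw [eval_neg] at hdown
  have htle := tle hy d
  have hTy : 0 < (T ℝ d).eval y := td_pos hy d
  rw [abs_le]
  constructor
  · nlinarith
  · nlinarith

noncomputable def pint (q : ℝ[X]) : ℝ[X] := q.sum fun n a => C (a/(n+1)) * X^(n+1)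

lemma pint_deriv (q : ℝ[X]) : derivative (pint q) = q := by
  unfold pint
  rw [Polynomial.sum, Polynomial.derivative_sum]
  conv_rhs => rw [q.as_sum_support_C_mul_X_pow]
  apply Finset.sum_congr rfl
  intro n hn
  rw [derivative_C_mul, derivative_X_pow]
  rw [← mul_assoc, ← Polynomial.C_mul]
  have h1 : n + 1 - 1 = n := rfl
  rw [h1]
  congr 2
  have : ((n:ℝ)+1) ≠ 0 := by positivity
  push_cast
  field_simp

lemma pint_natDegree (q : ℝ[X]) : (pint q).natDegree ≤ q.natDegree + 1 := by
  unfold pint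
  rw [Polynomial.sum]
  refine le_trans (Polynomial.natDegree_sum_le _ _) ?_
  rw [Finset.fold_max_le]
  constructor
  · exact Nat.zero_le _
  intro n hn
  refine le_trans (natDegree_mul_le) ?_
  have h1 : (C (q.coeff n / (↑n + 1))).natDegree = 0 := natDegree_C _
  have h2 : (X^(n+1) : ℝ[X]).natDegree ≤ n+1 := natDegree_X_pow_le _
  have h3 : n ≤ q.natDegree := le_natDegree_of_mem_supp n hn
  omega

lemma pint_ftc (q : ℝ[X]) (a b : ℝ) :
    ∫ t in a..b, q.eval t = (pint q).eval b - (pint q).eval a := by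
  conv_lhs => rw [← pint_deriv q]
  apply intervalIntegral.integral_deriv_eq_sub' (fun t => (pint q).eval t)
  · funext t; exact Polynomial.deriv (pint q)
  · intro t _; exact (pint q).differentiable.differentiableAt
  · exact ((pint q).derivative.continuous).continuousOn




lemma oneD (q : ℝ[X]) (n : ℕ) (hq : q.natDegree ≤ n) {μ : ℝ} (hμ0 : 0 < μ) (hμ1 : μ ≤ 1) :
    ∫ t in (0:ℝ)..1, (q.eval t)^2 * t
      ≤ (Tgrow ((2-μ)/μ))^(2*n+2) * ∫ t in (0:ℝ)..μ, (q.eval t)^2 * t := by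
  obtain ⟨Q, hQdeg, hG⟩ : ∃ Q : ℝ[X], Q.natDegree ≤ 2*n+2 ∧
      ∀ y : ℝ, ∫ t in (0:ℝ)..y, (q.eval t)^2 * t = Q.eval y - Q.eval 0 := by
    refine ⟨pint (q^2 * X), ?_, ?_⟩
    · have h1 : (q^2 * X : ℝ[X]).natDegree ≤ 2*n+1 := by
        refine le_trans natDegree_mul_le ?_
        have := natDegree_pow q 2
        have hx : (X:ℝ[X]).natDegree ≤ 1 := natDegree_X_le
        omega
      have := pint_natDegree (q^2 * X); omega
    · intro y
      rw [← pint_ftc (q^2 * X) 0 y]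
      apply intervalIntegral.integral_congr
      intro t _; simp
  have hGmono : ∀ y1 y2 : ℝ, 0 ≤ y1 → y1 ≤ y2 →
      Q.eval y1 - Q.eval 0 ≤ Q.eval y2 - Q.eval 0 := by
    intro y1 y2 h0 h12
    have h1 : (∫ t in (0:ℝ)..y1, (q.eval t)^2 * t) ≤ ∫ t in (0:ℝ)..y2, (q.eval t)^2 * t := by
      apply intervalIntegral.integral_mono_interval (le_refl 0) h0 h12 ?_ ?_
      · filter_upwards [MeasureTheory.ae_restrict_mem measurableSet_Ioc] with t ht
        have : 0 ≤ t := le_of_lt ht.1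
        positivity
      · exact ((q.continuous.pow 2).mul continuous_id).intervalIntegrable _ _
    rw [hG y1, hG y2] at h1; exact h1
  obtain ⟨P, hPdeg, hPeval⟩ : ∃ P : ℝ[X], P.natDegree ≤ 2*n+2 ∧
      ∀ u : ℝ, P.eval u = Q.eval (μ*(1+u)/2) - Q.eval 0 := by
    refine ⟨Q.comp (C (μ/2) * (X + 1)) - C (Q.eval 0), ?_, ?_⟩
    · refine le_trans (natDegree_sub_le _ _) ?_
      simp only [sup_le_iff, natDegree_C]
      refine ⟨le_trans natDegree_comp_le ?_, by omega⟩
      have h1 : (C (μ/2) * (X + 1) : ℝ[X]).natDegree ≤ 1 := by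
        refine le_trans natDegree_mul_le ?_
        have h2 : (X + 1 : ℝ[X]).natDegree ≤ 1 := by
          refine le_trans (natDegree_add_le _ _) ?_; simp
        simp only [natDegree_C]
        omega
      calc Q.natDegree * (C (μ/2) * (X + 1) : ℝ[X]).natDegree ≤ Q.natDegree * 1 :=
            Nat.mul_le_mul_left _ h1
        _ ≤ 2*n+2 := by omega
    · intro u
      simp only [eval_sub, eval_comp, eval_mul, eval_C, eval_add, eval_X, eval_one]
      congr 2
      ring
  set ρ : ℝ := (2-μ)/μ with hρ
  have hρ1 : 1 ≤ ρ := by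
    rw [hρ, le_div_iff₀ hμ0]; linarith
  have hM : ∀ u ∈ Icc (-1:ℝ) 1, |P.eval u| ≤ Q.eval μ - Q.eval 0 := by
    intro u hu
    rw [hPeval u, abs_le]
    have ht0 : 0 ≤ μ*(1+u)/2 := by
      have := hu.1; nlinarith
    have ht1 : μ*(1+u)/2 ≤ μ := by
      have := hu.2; nlinarith
    have h3 := hGmono 0 (μ*(1+u)/2) (le_refl 0) ht0
    have h4 := hGmono 0 μ (le_refl 0) (le_of_lt hμ0)
    exact ⟨by linarith, hGmono _ _ ht0 ht1⟩
  have hPρ : P.eval ρ = Q.eval 1 - Q.eval 0 := by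
    rw [hPeval ρ, hρ]
    congr 2
    field_simp; ring
  have hgr := growth P (2*n+2) hPdeg (Q.eval μ - Q.eval 0) ρ hM hρ1
  rw [hPρ] at hgr
  rw [hG 1, hG μ]
  calc Q.eval 1 - Q.eval 0 ≤ |Q.eval 1 - Q.eval 0| := le_abs_self _
    _ ≤ (Q.eval μ - Q.eval 0) * (Tgrow ρ)^(2*n+2) := hgr
    _ = (Tgrow ρ)^(2*n+2) * (Q.eval μ - Q.eval 0) := mul_comm _ _

/-- Fubini slicing: if every slice of `S` at height `h` is `Icc (l h) (r h)` for `h ∈ A`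
and empty otherwise, then the integral over `S` is the iterated integral. -/
lemma fubini_slices (f : ℝ × ℝ → ℝ) (hf : Continuous f) (S : Set (ℝ × ℝ))
    (hS : MeasurableSet S) (hSbdd : ∃ R : ℝ, S ⊆ Icc (-R) R ×ˢ Icc (-R) R)
    (A : Set ℝ) (hA : MeasurableSet A) (l r : ℝ → ℝ)
    (hslice : ∀ h ∈ A, {s : ℝ | (s, h) ∈ S} = Icc (l h) (r h))
    (hslice2 : ∀ h ∉ A, {s : ℝ | (s, h) ∈ S} = ∅) :
    ∫ z in S, f z = ∫ h in A, ∫ s in Icc (l h) (r h), f (s, h) := by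
  obtain ⟨R, hR⟩ := hSbdd
  have hint : Integrable (S.indicator f) (volume : Measure (ℝ × ℝ)) := by
    rw [integrable_indicator_iff hS]
    have hcpt : IsCompact (Icc (-R) R ×ˢ Icc (-R) R : Set (ℝ × ℝ)) :=
      isCompact_Icc.prod isCompact_Icc
    exact (hf.continuousOn.integrableOn_compact hcpt).mono_set hR
  have h1 : ∫ z in S, f z = ∫ z, S.indicator f z := (integral_indicator hS).symm
  rw [h1]
  have h2 : ∫ z, S.indicator f z
      = ∫ h, ∫ s, S.indicator f (s, h) := by
    rw [Measure.volume_eq_prod] at hint ⊢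
    exact integral_prod_symm _ hint
  rw [h2]
  have h3 : ∀ h : ℝ, (∫ s, S.indicator f (s, h))
      = A.indicator (fun h' => ∫ s in Icc (l h') (r h'), f (s, h')) h := by
    intro h
    by_cases hh : h ∈ A
    · rw [indicator_of_mem hh]
      have : (fun s => S.indicator f (s, h))
          = (Icc (l h) (r h)).indicator (fun s => f (s, h)) := by
        funext s
        by_cases hs : (s, h) ∈ S
        · rw [indicator_of_mem hs]
          have : s ∈ {s : ℝ | (s, h) ∈ S} := hs
          rw [hslice h hh] at this
          rw [indicator_of_mem this]
        · rw [indicator_of_notMem hs]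
          have : s ∉ {s : ℝ | (s, h) ∈ S} := hs
          rw [hslice h hh] at this
          rw [indicator_of_notMem this]
      rw [this, integral_indicator measurableSet_Icc]
    · rw [indicator_of_notMem hh]
      have : (fun s => S.indicator f (s, h)) = fun _ => 0 := by
        funext s
        have hns : (s, h) ∉ S := by
          intro hmem
          have : s ∈ {s : ℝ | (s, h) ∈ S} := hmem
          rw [hslice2 h hh] at this
          exact this
        exact indicator_of_notMem hns f
      rw [this, integral_zero]
  simp_rw [h3]
  rw [integral_indicator hA]



variable {a1 a2 c1 : ℝ}

lemma triset_convex : Convex ℝ (TriSet a1 a2 c1) := by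
  intro x hx y hy a b ha hb hab
  obtain ⟨h1, h2, h3, h4⟩ := hx
  obtain ⟨k1, k2, k3, k4⟩ := hy
  have e1 : (a • x + b • y).1 = a * x.1 + b * y.1 := rfl
  have e2 : (a • x + b • y).2 = a * x.2 + b * y.2 := rfl
  refine ⟨?_, ?_, ?_, ?_⟩
  · rw [e2]; have := mul_nonneg ha h1; have := mul_nonneg hb k1; linarith
  · rw [e2]
    calc a * x.2 + b * y.2 ≤ a * a2 + b * a2 :=
          add_le_add (mul_le_mul_of_nonneg_left h2 ha) (mul_le_mul_of_nonneg_left k2 hb)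
      _ = a2 := by rw [← add_mul, hab, one_mul]
  · rw [e1, e2]
    calc a1 * (a * x.2 + b * y.2) = a * (a1 * x.2) + b * (a1 * y.2) := by ring
      _ ≤ a * (a2 * x.1) + b * (a2 * y.1) :=
          add_le_add (mul_le_mul_of_nonneg_left h3 ha) (mul_le_mul_of_nonneg_left k3 hb)
      _ = a2 * (a * x.1 + b * y.1) := by ring
  · rw [e1, e2]
    calc a2 * (a * x.1 + b * y.1) + (c1 - a1) * (a * x.2 + b * y.2)
        = a * (a2 * x.1 + (c1 - a1) * x.2) + b * (a2 * y.1 + (c1 - a1) * y.2) := by ring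
      _ ≤ a * (c1 * a2) + b * (c1 * a2) :=
          add_le_add (mul_le_mul_of_nonneg_left h4 ha) (mul_le_mul_of_nonneg_left k4 hb)
      _ = c1 * a2 := by rw [← add_mul, hab, one_mul]

lemma tri_eq (ha2 : 0 < a2) (hc1 : 0 < c1) :
    convexHull ℝ {((a1, a2) : ℝ × ℝ), (0, 0), (c1, 0)} = TriSet a1 a2 c1 := by
  apply Subset.antisymm
  · apply convexHull_min ?_ triset_convex
    intro z hz
    rcases hz with rfl | rfl | rfl
    · refine ⟨le_of_lt ha2, le_refl _, le_of_eq (mul_comm _ _), le_of_eq (by ring)⟩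
    · refine ⟨le_refl _, le_of_lt ha2, le_of_eq (by ring), ?_⟩
      show a2 * 0 + (c1 - a1) * 0 ≤ c1 * a2
      nlinarith
    · refine ⟨le_refl _, le_of_lt ha2, ?_, le_of_eq (by ring)⟩
      show a1 * 0 ≤ a2 * c1
      nlinarith
  · intro x hx
    obtain ⟨h1, h2, h3, h4⟩ := hx
    have hA : ((a1, a2) : ℝ × ℝ) ∈ convexHull ℝ {((a1, a2) : ℝ × ℝ), (0, 0), (c1, 0)} :=
      subset_convexHull ℝ _ (by simp)
    by_cases hx2 : x.2 = a2
    · rw [hx2] at h3 h4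
      have e4 : a2 * x.1 ≤ a1 * a2 := by linarith
      have e5 : a2 * x.1 = a2 * a1 := by linarith
      have hx1 : x.1 = a1 := mul_left_cancel₀ (ne_of_gt ha2) e5
      have : x = ((a1, a2) : ℝ × ℝ) := Prod.ext hx1 hx2
      rw [this]; exact hA
    · have hlt : x.2 < a2 := lt_of_le_of_ne h2 hx2
      set lam : ℝ := x.2 / a2 with hlam
      have hlam0 : 0 ≤ lam := div_nonneg h1 (le_of_lt ha2)
      have hlam1 : lam < 1 := by rw [hlam, div_lt_one ha2]; exact hlt
      set w : ℝ × ℝ := ((x.1 - lam * a1) / (1 - lam), 0) with hw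
      have h1l : (0:ℝ) < 1 - lam := by linarith
      have hnum : 0 ≤ x.1 - lam * a1 := by
        rw [sub_nonneg, hlam, div_mul_eq_mul_div, div_le_iff₀ ha2]
        nlinarith
      have hw1a : 0 ≤ w.1 := div_nonneg hnum (le_of_lt h1l)
      have hw1b : w.1 ≤ c1 := by
        rw [hw]
        rw [div_le_iff₀ h1l, hlam]
        have e6 : c1 * (1 - x.2 / a2) * a2 = c1 * a2 - c1 * x.2 := by field_simp
        have e7 : (x.1 - x.2 / a2 * a1) * a2 = x.1 * a2 - x.2 * a1 := by field_simp
        rw [← mul_le_mul_iff_left₀ ha2, e6, e7]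
        nlinarith
      have hwmem : w ∈ convexHull ℝ {((a1, a2) : ℝ × ℝ), (0, 0), (c1, 0)} := by
        have hseg : w ∈ segment ℝ ((0,0) : ℝ × ℝ) ((c1, 0) : ℝ × ℝ) := by
          refine ⟨1 - w.1/c1, w.1/c1, by
            rw [sub_nonneg]; exact div_le_one_of_le₀ hw1b (le_of_lt hc1),
            div_nonneg hw1a (le_of_lt hc1), by ring, ?_⟩
          have hcc : w.1 / c1 * c1 = w.1 := div_mul_cancel₀ _ (ne_of_gt hc1)
          apply Prod.ext
          · show (1 - w.1/c1) * 0 + w.1/c1 * c1 = w.1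
            rw [hcc]; ring
          · show (1 - w.1/c1) * 0 + w.1/c1 * 0 = w.2
            rw [hw]; ring
        exact segment_subset_convexHull (by simp) (by simp) hseg
      have hxseg : x ∈ segment ℝ ((a1, a2) : ℝ × ℝ) w := by
        refine ⟨lam, 1 - lam, hlam0, le_of_lt h1l, by ring, ?_⟩
        have e1 : (1 - lam) * w.1 = x.1 - lam * a1 := by
          rw [hw, mul_comm]
          exact div_mul_cancel₀ _ (ne_of_gt h1l)
        have e2 : lam * a2 = x.2 := by
          rw [hlam]; exact div_mul_cancel₀ _ (ne_of_gt ha2)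
        apply Prod.ext
        · show lam * a1 + (1-lam) * w.1 = x.1
          rw [e1]; ring
        · show lam * a2 + (1-lam) * w.2 = x.2
          rw [hw]; simpa using e2
      exact (convex_convexHull ℝ _).segment_subset hA hwmem hxseg



lemma tri_slice (ha2 : 0 < a2) (hc1 : 0 < c1) (h : ℝ) (hh : h ∈ Icc 0 a2) :
    {s : ℝ | (s, h) ∈ TriSet a1 a2 c1}
      = Icc (a1 * h / a2) (a1 * h / a2 + (1 - h / a2) * c1) := by
  ext s
  simp only [TriSet, mem_setOf_eq, mem_Icc]
  constructor
  · rintro ⟨-, -, h3, h4⟩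
    constructor
    · rw [div_le_iff₀ ha2]; linarith
    · rw [← mul_le_mul_iff_left₀ ha2]
      have : (a1 * h / a2 + (1 - h / a2) * c1) * a2 = a1 * h + (a2 - h) * c1 := by
        field_simp; try ring
      rw [this]; nlinarith
  · rintro ⟨g1, g2⟩
    refine ⟨hh.1, hh.2, ?_, ?_⟩
    · rw [div_le_iff₀ ha2] at g1; linarith
    · rw [← mul_le_mul_iff_left₀ ha2] at g2
      have : (a1 * h / a2 + (1 - h / a2) * c1) * a2 = a1 * h + (a2 - h) * c1 := by
        field_simp; try ring
      rw [this] at g2; nlinarith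

lemma tri_slice_empty (h : ℝ) (hh : h ∉ Icc 0 a2) :
    {s : ℝ | (s, h) ∈ TriSet a1 a2 c1} = ∅ := by
  ext s
  simp only [mem_empty_iff_false, iff_false]
  intro hs
  obtain ⟨h1, h2, -, -⟩ := hs
  simp only [mem_Icc, not_and] at hh
  exact hh h1 h2

lemma triD_slice (ha2 : 0 < a2) (hc1 : 0 < c1) {δ : ℝ} (hδ : 0 < δ) (h : ℝ)
    (hh : h ∈ Ioc δ a2) :
    {s : ℝ | (s, h) ∈ {x ∈ TriSet a1 a2 c1 | δ < x.2}}
      = Icc (a1 * h / a2) (a1 * h / a2 + (1 - h / a2) * c1) := by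
  have h2 : {s : ℝ | (s, h) ∈ {x ∈ TriSet a1 a2 c1 | δ < x.2}}
      = {s : ℝ | (s, h) ∈ TriSet a1 a2 c1} := by
    ext s; simp only [mem_setOf_eq, mem_sep_iff]
    exact ⟨fun a => a.1, fun a => ⟨a, hh.1⟩⟩
  rw [h2]
  exact tri_slice ha2 hc1 h ⟨le_of_lt (lt_trans hδ hh.1), hh.2⟩

lemma triD_slice_empty (ha2 : 0 < a2) {δ : ℝ} (hδ : 0 < δ) (h : ℝ) (hh : h ∉ Ioc δ a2) :
    {s : ℝ | (s, h) ∈ {x ∈ TriSet a1 a2 c1 | δ < x.2}} = ∅ := by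
  ext s
  simp only [mem_setOf_eq, mem_sep_iff, mem_empty_iff_false, iff_false]
  rintro ⟨⟨h1, h2, -, -⟩, h5⟩
  exact hh ⟨h5, h2⟩

lemma triset_bdd (ha2 : 0 < a2) (hc1 : 0 < c1) :
    ∃ R : ℝ, TriSet a1 a2 c1 ⊆ Icc (-R) R ×ˢ Icc (-R) R := by
  refine ⟨|a1| + |c1 - a1| + c1 + a2, ?_⟩
  rintro ⟨s, h⟩ ⟨h1, h2, h3, h4⟩
  have ha : -|a1| ≤ a1 := neg_abs_le a1
  have hb : a1 ≤ |a1| := le_abs_self a1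
  have hc : -(|c1 - a1|) ≤ c1 - a1 := neg_abs_le _
  have hd : c1 - a1 ≤ |c1 - a1| := le_abs_self _
  have habs : 0 ≤ |a1| := abs_nonneg _
  have habs2 : 0 ≤ |c1 - a1| := abs_nonneg _
  constructor <;> simp only [mem_Icc]
  · constructor
    · -- -R ≤ s  from a1 * h ≤ a2 * s
      nlinarith
    · nlinarith
  · constructor <;> nlinarith

lemma triset_meas : MeasurableSet (TriSet a1 a2 c1) := by
  apply MeasurableSet.inter
  · exact measurableSet_le measurable_const measurable_snd
  apply MeasurableSet.inter
  · exact measurableSet_le measurable_snd measurable_const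
  apply MeasurableSet.inter
  · exact measurableSet_le (measurable_snd.const_mul a1) (measurable_fst.const_mul a2)
  · exact measurableSet_le ((measurable_fst.const_mul a2).add (measurable_snd.const_mul (c1 - a1)))
      measurable_const

lemma triD_meas {δ : ℝ} : MeasurableSet {x ∈ TriSet a1 a2 c1 | δ < x.2} :=
  triset_meas.inter (measurableSet_lt measurable_const measurable_snd)

lemma eval_aeval (g : Fin 2 → ℝ[X]) (t : ℝ) (v : MvPolynomial (Fin 2) ℝ) :
    ((MvPolynomial.aeval g v : ℝ[X]).eval t) = MvPolynomial.eval (fun i => (g i).eval t) v := by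
  induction v using MvPolynomial.induction_on with
  | C a => simp
  | add p q hp hq => simp [hp, hq]
  | mul_X p i hp => simp [hp]

lemma aeval_natDegree (v : MvPolynomial (Fin 2) ℝ) (p : ℕ)
    (hv : ∀ i : Fin 2, v.degreeOf i ≤ p) (g : Fin 2 → ℝ[X])
    (hg : ∀ i, (g i).natDegree ≤ 1) :
    (MvPolynomial.aeval g v : ℝ[X]).natDegree ≤ 2 * p := by
  rw [MvPolynomial.aeval_def, MvPolynomial.eval₂_eq]
  refine le_trans (natDegree_sum_le _ _) ?_
  rw [Finset.fold_max_le]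
  refine ⟨Nat.zero_le _, ?_⟩
  intro d hd
  refine le_trans natDegree_mul_le ?_
  have h1 : (algebraMap ℝ ℝ[X] (MvPolynomial.coeff d v)).natDegree = 0 := by
    exact natDegree_C _
  have h2 : (∏ i ∈ d.support, g i ^ d i).natDegree ≤ ∑ i ∈ d.support, d i := by
    refine le_trans (natDegree_prod_le _ _) ?_
    apply Finset.sum_le_sum
    intro i _
    refine le_trans (natDegree_pow _ _).le ?_
    calc d i * (g i).natDegree ≤ d i * 1 := Nat.mul_le_mul_left _ (hg i)
      _ = d i := by omega
  have h3 : ∑ i ∈ d.support, d i ≤ 2 * p := by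
    have hsub : d.support ⊆ Finset.univ := Finset.subset_univ _
    have : ∑ i ∈ d.support, d i ≤ ∑ i : Fin 2, d i :=
      Finset.sum_le_sum_of_subset hsub
    have huniv : ∑ i : Fin 2, d i = d 0 + d 1 := by
      simp [Fin.sum_univ_two]
    have hd0 : d 0 ≤ p := le_trans ?_ (hv 0)
    · have hd1 : d 1 ≤ p := le_trans ?_ (hv 1)
      · omega
      · rw [MvPolynomial.degreeOf_eq_sup]
        exact Finset.le_sup (f := fun m => m 1) hd
    · rw [MvPolynomial.degreeOf_eq_sup]
      exact Finset.le_sup (f := fun m => m 0) hd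
  omega






end Aux

open Polynomial Polynomial.Chebyshev Real Set MeasureTheory in
/-- `hp` domain inverse estimate on a triangle: let `Δ` be the triangle with vertices
`A = (a₁,a₂)`, `B = (0,0)`, `C = (c₁,0)` with `a₂, c₁ > 0`, let `δ ∈ (0,a₂)` and
`Δ_δ = {x ∈ Δ : x₂ > δ}`.  Then for every polynomial `v` of degree at most `p` in each
variable, `‖v‖_{L²(Δ)} ≤ T((1+δa₂⁻¹)/(1−δa₂⁻¹))^{2p+3/2} ‖v‖_{L²(Δ_δ)}`. -/
theorem triangle_domain_inverse_estimate (a1 a2 c1 : ℝ) (ha2 : 0 < a2) (hc1 : 0 < c1)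
    (δ : ℝ) (hδ : δ ∈ Set.Ioo 0 a2) (p : ℕ) (v : MvPolynomial (Fin 2) ℝ)
    (hv : ∀ i : Fin 2, v.degreeOf i ≤ p) :
    Real.sqrt (∫ x in convexHull ℝ {((a1, a2) : ℝ × ℝ), (0, 0), (c1, 0)},
        (MvPolynomial.eval ![x.1, x.2] v) ^ 2) ≤
      Tgrow ((1 + δ * a2⁻¹) / (1 - δ * a2⁻¹)) ^ (2 * (p : ℝ) + 3 / 2) *
        Real.sqrt (∫ x in {x ∈ convexHull ℝ {((a1, a2) : ℝ × ℝ), (0, 0), (c1, 0)} | δ < x.2},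
          (MvPolynomial.eval ![x.1, x.2] v) ^ 2) := by
  obtain ⟨hδ0, hδa⟩ := hδ
  rw [tri_eq ha2 hc1]
  -- basic data
  set f : ℝ × ℝ → ℝ := fun z => (MvPolynomial.eval ![z.1, z.2] v) ^ 2 with hf
  have hfc : Continuous f := by
    apply Continuous.pow
    have h1 : Continuous fun z : ℝ × ℝ => (![z.1, z.2] : Fin 2 → ℝ) := by
      apply continuous_pi
      intro i
      fin_cases i
      · exact continuous_fst
      · exact continuous_snd
    exact (MvPolynomial.continuous_eval v).comp h1
  have hf0 : ∀ z, 0 ≤ f z := fun z => sq_nonneg _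
  set l : ℝ → ℝ := fun h => a1 * h / a2 with hl
  set W : ℝ → ℝ := fun h => (1 - h / a2) * c1 with hW
  set r : ℝ → ℝ := fun h => l h + W h with hr
  set G : ℝ → ℝ := fun h => ∫ s in Icc (l h) (r h), f (s, h) with hG
  set μ : ℝ := 1 - δ / a2 with hμ
  have hμ0 : 0 < μ := by rw [hμ]; have : δ / a2 < 1 := (div_lt_one ha2).2 hδa; linarith
  have hμ1 : μ ≤ 1 := by rw [hμ]; have : 0 < δ / a2 := div_pos hδ0 ha2; linarith
  -- Fubini for the two sets
  have hI : ∫ z in TriSet a1 a2 c1, f z = ∫ h in Ioo 0 a2, G h := by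
    rw [fubini_slices f hfc _ triset_meas (triset_bdd ha2 hc1) (Icc 0 a2) measurableSet_Icc
      l r (fun h hh => by rw [tri_slice ha2 hc1 h hh]) (fun h hh => tri_slice_empty h hh)]
    rw [integral_Icc_eq_integral_Ioc, integral_Ioc_eq_integral_Ioo]
  have hIδ : ∫ z in {x ∈ TriSet a1 a2 c1 | δ < x.2}, f z = ∫ h in Ioo δ a2, G h := by
    rw [fubini_slices f hfc _ triD_meas ?_ (Ioc δ a2) measurableSet_Ioc
      l r (fun h hh => by rw [triD_slice ha2 hc1 hδ0 h hh])
      (fun h hh => triD_slice_empty ha2 hδ0 h hh)]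
    · rw [integral_Ioc_eq_integral_Ioo]
    · obtain ⟨R, hR⟩ := triset_bdd (a1 := a1) ha2 hc1
      exact ⟨R, fun z hz => hR hz.1⟩
  -- continuity of auxiliary functions
  have hWc : Continuous W := by
    rw [hW]
    exact (continuous_const.sub (continuous_id.div_const a2)).mul continuous_const
  have hlc : Continuous l := by
    rw [hl]
    exact (continuous_const.mul continuous_id).div_const a2
  -- the rescaled integrand
  set F : ℝ → ℝ → ℝ := fun h u => W h * f (l h + W h * u, h) with hF
  have hGeq : ∀ h : ℝ, h < a2 → G h = ∫ u in Ioo (0:ℝ) 1, F h u := by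
    intro h hh
    have hWpos : 0 < W h := by
      rw [hW]
      have : h / a2 < 1 := (div_lt_one ha2).2 hh
      have : 0 < 1 - h / a2 := by linarith
      exact mul_pos this hc1
    have hlr : l h ≤ r h := by rw [hr]; simp only [le_add_iff_nonneg_right]; linarith
    rw [hG]
    simp only
    rw [integral_Icc_eq_integral_Ioc, ← intervalIntegral.integral_of_le hlr]
    have hsub := intervalIntegral.integral_comp_add_mul (fun s => f (s, h))
      (ne_of_gt hWpos) (l h) (a := 0) (b := 1)
    have he1 : l h + W h * 0 = l h := by ring
    have he2 : l h + W h * 1 = r h := by rw [hr]; ring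
    rw [he1, he2] at hsub
    have : ∫ s in (l h)..(r h), f (s, h) = W h • ∫ u in (0:ℝ)..1, f (l h + W h * u, h) := by
      rw [hsub, smul_smul, mul_inv_cancel₀ (ne_of_gt hWpos), one_smul]
    rw [this, intervalIntegral.integral_of_le (by norm_num : (0:ℝ) ≤ 1),
      integral_Ioc_eq_integral_Ioo, smul_eq_mul, ← integral_const_mul]
  -- joint continuity and integrability
  have hFcont : Continuous (Function.uncurry F) := by
    have h1 : Continuous fun z : ℝ × ℝ => (l z.1 + W z.1 * z.2, z.1) := by
      apply Continuous.prodMk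
      · exact (hlc.comp continuous_fst).add ((hWc.comp continuous_fst).mul continuous_snd)
      · exact continuous_fst
    exact (hWc.comp continuous_fst).mul (hfc.comp h1)
  have hFint : Integrable (Function.uncurry F)
      ((volume.restrict (Ioo 0 a2)).prod (volume.restrict (Ioo 0 1))) := by
    rw [Measure.prod_restrict]
    refine ((hFcont.continuousOn).integrableOn_compact
      (isCompact_Icc.prod isCompact_Icc : IsCompact (Icc (0:ℝ) a2 ×ˢ Icc (0:ℝ) 1))).mono_set ?_
    exact prod_mono Ioo_subset_Icc_self Ioo_subset_Icc_self
  have hFintδ : Integrable (Function.uncurry F)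
      ((volume.restrict (Ioo δ a2)).prod (volume.restrict (Ioo 0 1))) := by
    rw [Measure.prod_restrict]
    refine ((hFcont.continuousOn).integrableOn_compact
      (isCompact_Icc.prod isCompact_Icc : IsCompact (Icc δ a2 ×ˢ Icc (0:ℝ) 1))).mono_set ?_
    exact prod_mono Ioo_subset_Icc_self Ioo_subset_Icc_self
  -- swap the integrals
  have hI2 : ∫ z in TriSet a1 a2 c1, f z = ∫ u in Ioo (0:ℝ) 1, ∫ h in Ioo 0 a2, F h u := by
    rw [hI]
    rw [setIntegral_congr_fun measurableSet_Ioo (fun h hh => hGeq h hh.2)]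
    exact integral_integral_swap hFint
  have hIδ2 : ∫ z in {x ∈ TriSet a1 a2 c1 | δ < x.2}, f z
      = ∫ u in Ioo (0:ℝ) 1, ∫ h in Ioo δ a2, F h u := by
    rw [hIδ]
    rw [setIntegral_congr_fun measurableSet_Ioo (fun h hh => hGeq h hh.2)]
    exact integral_integral_swap hFintδ
  have hInt1 : Integrable (fun u => ∫ h in Ioo 0 a2, F h u) (volume.restrict (Ioo (0:ℝ) 1)) :=
    hFint.integral_prod_right
  have hInt2 : Integrable (fun u => ∫ h in Ioo δ a2, F h u) (volume.restrict (Ioo (0:ℝ) 1)) :=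
    hFintδ.integral_prod_right
  -- the key pointwise inequality in u
  set K : ℝ := (Tgrow ((2-μ)/μ))^(2*(2*p)+2) with hK
  have key : ∀ u : ℝ, (∫ h in Ioo 0 a2, F h u) ≤ K * ∫ h in Ioo δ a2, F h u := by
    intro u
    set Q : ℝ[X] := MvPolynomial.aeval ![C (c1*u) + C ((a1 - c1*u)/a2) * X, X] v with hQ
    have hQdeg : Q.natDegree ≤ 2 * p := by
      apply aeval_natDegree v p hv
      intro i
      fin_cases i
      · simp only [Matrix.cons_val_zero]
        refine le_trans (natDegree_add_le _ _) ?_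
        simp only [natDegree_C, max_le_iff]
        refine ⟨Nat.zero_le _, le_trans natDegree_mul_le ?_⟩
        simp [natDegree_C]
      · simpa using natDegree_X_le
    have hfQ : ∀ h : ℝ, f (l h + W h * u, h) = (Q.eval h)^2 := by
      intro h
      have harg : (![l h + W h * u, h] : Fin 2 → ℝ)
          = fun i => eval h ((![C (c1*u) + C ((a1 - c1*u)/a2) * X, X] : Fin 2 → ℝ[X]) i) := by
        funext i
        fin_cases i
        · show l h + W h * u = eval h (C (c1*u) + C ((a1 - c1*u)/a2) * X)
          rw [hl, hW]
          simp only [eval_add, eval_mul, eval_C, eval_X]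
          field_simp
          ring
        · show h = eval h (X : ℝ[X])
          simp
      rw [hQ, eval_aeval]
      show (MvPolynomial.eval ![l h + W h * u, h] v) ^ 2 = _
      rw [harg]
    set R : ℝ[X] := Q.comp (C a2 - C a2 * X) with hR
    have hRdeg : R.natDegree ≤ 2*p := by
      refine le_trans natDegree_comp_le ?_
      have h1 : (C a2 - C a2 * X : ℝ[X]).natDegree ≤ 1 := by
        refine le_trans (natDegree_sub_le _ _) ?_
        simp only [natDegree_C, max_le_iff]
        exact ⟨Nat.zero_le _, le_trans natDegree_mul_le (by simp [natDegree_C])⟩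
      calc Q.natDegree * (C a2 - C a2 * X : ℝ[X]).natDegree ≤ Q.natDegree * 1 :=
            Nat.mul_le_mul_left _ h1
        _ ≤ 2*p := by omega
    have hRe : ∀ τ : ℝ, R.eval τ = Q.eval (a2 - a2 * τ) := by
      intro τ; rw [hR, eval_comp]; simp
    have hFeq : ∀ τ : ℝ, F (a2 - a2 * τ) u = c1 * ((R.eval τ)^2 * τ) := by
      intro τ
      rw [hF]
      simp only
      rw [hfQ, ← hRe, hW]
      have h9 : 1 - (a2 - a2 * τ) / a2 = τ := by field_simp; ring
      show (1 - (a2 - a2 * τ) / a2) * c1 * eval τ R ^ 2 = c1 * (eval τ R ^ 2 * τ)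
      rw [h9]
      ring
    have hsub := intervalIntegral.integral_comp_sub_mul (fun h => F h u)
      (ne_of_gt ha2) a2 (a := (0:ℝ)) (b := 1)
    have hsubδ := intervalIntegral.integral_comp_sub_mul (fun h => F h u)
      (ne_of_gt ha2) a2 (a := (0:ℝ)) (b := μ)
    have he1 : a2 - a2 * (1:ℝ) = 0 := by ring
    have he2 : a2 - a2 * (0:ℝ) = a2 := by ring
    have he3 : a2 - a2 * μ = δ := by rw [hμ]; field_simp; ring
    rw [he1, he2] at hsub
    rw [he3, he2] at hsubδ
    have comp1 : ∫ h in Ioo 0 a2, F h u = (a2 * c1) * ∫ τ in (0:ℝ)..1, (R.eval τ)^2 * τ := by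
      rw [← integral_Ioc_eq_integral_Ioo,
        ← intervalIntegral.integral_of_le (le_of_lt ha2)]
      have : ∫ h in (0:ℝ)..a2, F h u = a2 • ∫ τ in (0:ℝ)..1, F (a2 - a2*τ) u := by
        rw [hsub, smul_smul, mul_inv_cancel₀ (ne_of_gt ha2), one_smul]
      rw [this]
      have : ∫ τ in (0:ℝ)..1, F (a2 - a2*τ) u = c1 * ∫ τ in (0:ℝ)..1, (R.eval τ)^2 * τ := by
        rw [← intervalIntegral.integral_const_mul]
        apply intervalIntegral.integral_congr
        intro τ _
        exact hFeq τ
      rw [this, smul_eq_mul]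
      ring
    have comp2 : ∫ h in Ioo δ a2, F h u = (a2 * c1) * ∫ τ in (0:ℝ)..μ, (R.eval τ)^2 * τ := by
      rw [← integral_Ioc_eq_integral_Ioo,
        ← intervalIntegral.integral_of_le (le_of_lt hδa)]
      have : ∫ h in δ..a2, F h u = a2 • ∫ τ in (0:ℝ)..μ, F (a2 - a2*τ) u := by
        rw [hsubδ, smul_smul, mul_inv_cancel₀ (ne_of_gt ha2), one_smul]
      rw [this]
      have : ∫ τ in (0:ℝ)..μ, F (a2 - a2*τ) u = c1 * ∫ τ in (0:ℝ)..μ, (R.eval τ)^2 * τ := by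
        rw [← intervalIntegral.integral_const_mul]
        apply intervalIntegral.integral_congr
        intro τ _
        exact hFeq τ
      rw [this, smul_eq_mul]
      ring
    rw [comp1, comp2, hK]
    have hone := oneD R (2*p) hRdeg hμ0 hμ1
    have hac : (0:ℝ) ≤ a2 * c1 := by positivity
    calc (a2 * c1) * ∫ τ in (0:ℝ)..1, (R.eval τ)^2 * τ
        ≤ (a2 * c1) * ((Tgrow ((2-μ)/μ))^(2*(2*p)+2) * ∫ τ in (0:ℝ)..μ, (R.eval τ)^2 * τ) :=
          mul_le_mul_of_nonneg_left hone hac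
      _ = (Tgrow ((2-μ)/μ))^(2*(2*p)+2) * ((a2 * c1) * ∫ τ in (0:ℝ)..μ, (R.eval τ)^2 * τ) := by
          ring
  -- combine
  have hmain : ∫ z in TriSet a1 a2 c1, f z ≤ K * ∫ z in {x ∈ TriSet a1 a2 c1 | δ < x.2}, f z := by
    rw [hI2, hIδ2, ← integral_const_mul]
    exact integral_mono hInt1 (hInt2.const_mul K) key
  have hIδnn : 0 ≤ ∫ z in {x ∈ TriSet a1 a2 c1 | δ < x.2}, f z :=
    setIntegral_nonneg triD_meas (fun z _ => hf0 z)
  have hρeq : (2-μ)/μ = (1 + δ * a2⁻¹)/(1 - δ * a2⁻¹) := by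
    rw [hμ, div_eq_mul_inv δ]
    ring_nf
  have hρ1 : 1 ≤ (1 + δ * a2⁻¹)/(1 - δ * a2⁻¹) := by
    rw [← hρeq, le_div_iff₀ hμ0]
    linarith
  set z : ℝ := Tgrow ((1 + δ * a2⁻¹)/(1 - δ * a2⁻¹)) with hz
  have hz1 : 1 ≤ z := Tgrow_ge_one hρ1
  have hz0 : 0 ≤ z := le_trans zero_le_one hz1
  have hKz : K = z^(2*(2*p)+2) := by rw [hK, hρeq]
  calc Real.sqrt (∫ z in TriSet a1 a2 c1, f z)
      ≤ Real.sqrt (K * ∫ z in {x ∈ TriSet a1 a2 c1 | δ < x.2}, f z) := Real.sqrt_le_sqrt hmain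
    _ = Real.sqrt K * Real.sqrt (∫ z in {x ∈ TriSet a1 a2 c1 | δ < x.2}, f z) := by
        apply Real.sqrt_mul
        rw [hKz]; positivity
    _ = z^(2*p+1) * Real.sqrt (∫ z in {x ∈ TriSet a1 a2 c1 | δ < x.2}, f z) := by
        congr 1
        rw [hKz]
        have : z^(2*(2*p)+2) = (z^(2*p+1))^2 := by ring
        rw [this, Real.sqrt_sq (by positivity)]
    _ ≤ z ^ (2 * (p:ℝ) + 3/2) * Real.sqrt (∫ z in {x ∈ TriSet a1 a2 c1 | δ < x.2}, f z) := by
        apply mul_le_mul_of_nonneg_right ?_ (Real.sqrt_nonneg _)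
        rw [← Real.rpow_natCast z (2*p+1)]
        apply Real.rpow_le_rpow_of_exponent_le hz1
        push_cast
        linarith
end

section
/- There exists a constant C > 0 such that for every integer p ≥ 1 and every real η with 0 ≤ η ≤ 1/(p(p+1)), one has T((1 + 3η)/(1 − η))^{4p+3} ≤ C, where T(t) = t + √(t²−1). -/
/-- There is a constant `C > 0` such that for every integer `p ≥ 1` and every
`0 ≤ η ≤ 1/(p(p+1))` one has `T((1+3η)/(1−η))^{4p+3} ≤ C`. -/
theorem growth_factor_bounded :
    ∃ C : ℝ, 0 < C ∧ ∀ p : ℕ, 1 ≤ p → ∀ η : ℝ, 0 ≤ η →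
      η ≤ 1 / ((p : ℝ) * ((p : ℝ) + 1)) →
      Tgrow ((1 + 3 * η) / (1 - η)) ^ (4 * p + 3) ≤ C := by
  refine ⟨Real.exp 105, Real.exp_pos _, ?_⟩
  intro p hp η hη0 hηp
  have hp1 : (1 : ℝ) ≤ (p : ℝ) := by exact_mod_cast hp
  have hppos : (0 : ℝ) < (p : ℝ) := lt_of_lt_of_le one_pos hp1
  have hpp2 : (2 : ℝ) ≤ (p : ℝ) * ((p : ℝ) + 1) := by nlinarith
  have hη2 : η ≤ 1 / 2 := le_trans hηp (by
    rw [div_le_div_iff₀ (by linarith) (by norm_num)]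
    linarith)
  have hden : (0 : ℝ) < 1 - η := by linarith
  set s : ℝ := (1 + 3 * η) / (1 - η) with hs
  have hs0 : 0 ≤ s := div_nonneg (by linarith) hden.le
  have hsle : s ≤ 1 + 8 * η := by
    rw [hs, div_le_iff₀ hden]; nlinarith
  have hs1 : 1 ≤ s := by
    rw [hs, le_div_iff₀ hden]; linarith
  -- bound on the sqrt part
  have hsq : s ^ 2 - 1 ≤ 49 * η := by nlinarith
  have hsqrt : Real.sqrt (s ^ 2 - 1) ≤ 7 * Real.sqrt η := by
    have h1 : Real.sqrt (s ^ 2 - 1) ≤ Real.sqrt (49 * η) := Real.sqrt_le_sqrt hsq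
    have h2 : Real.sqrt (49 * η) = 7 * Real.sqrt η := by
      rw [Real.sqrt_mul (by norm_num : (0:ℝ) ≤ 49),
        show (49:ℝ) = 7 ^ 2 by norm_num, Real.sqrt_sq (by norm_num : (0:ℝ) ≤ 7)]
    rw [h2] at h1; exact h1
  have hηsqrt : η ≤ Real.sqrt η := by
    nlinarith [Real.sq_sqrt hη0, Real.sqrt_nonneg η, Real.sqrt_le_one.mpr (by linarith : η ≤ 1)]
  have hT : Tgrow s ≤ 1 + 15 * Real.sqrt η := by
    unfold Tgrow
    have := hsqrt
    nlinarith
  have hsqrtp : Real.sqrt η ≤ 1 / (p : ℝ) := by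
    have hη' : η ≤ (1 / (p : ℝ)) ^ 2 := by
      refine le_trans hηp ?_
      rw [div_pow, one_pow, div_le_div_iff₀ (by nlinarith) (by positivity)]
      nlinarith
    calc Real.sqrt η ≤ Real.sqrt ((1 / (p : ℝ)) ^ 2) := Real.sqrt_le_sqrt hη'
      _ = 1 / (p : ℝ) := Real.sqrt_sq (by positivity)
  have hT2 : Tgrow s ≤ 1 + 15 / (p : ℝ) := by
    have : 15 * Real.sqrt η ≤ 15 / (p : ℝ) := by
      rw [div_eq_mul_one_div 15]
      exact mul_le_mul_of_nonneg_left hsqrtp (by norm_num)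
    linarith
  have hTnn : 0 ≤ Tgrow s := by
    unfold Tgrow; positivity
  have step1 : Tgrow s ^ (4 * p + 3) ≤ (1 + 15 / (p : ℝ)) ^ (4 * p + 3) :=
    pow_le_pow_left₀ hTnn hT2 _
  have step2 : (1 + 15 / (p : ℝ)) ^ (4 * p + 3) ≤ Real.exp (15 / (p : ℝ)) ^ (4 * p + 3) := by
    apply pow_le_pow_left₀ (by positivity)
    have := Real.add_one_le_exp (15 / (p : ℝ))
    linarith
  have step3 : Real.exp (15 / (p : ℝ)) ^ (4 * p + 3) = Real.exp ((4 * p + 3 : ℕ) * (15 / (p : ℝ))) := by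
    rw [← Real.exp_nat_mul]
  have step4 : ((4 * p + 3 : ℕ) : ℝ) * (15 / (p : ℝ)) ≤ 105 := by
    have : ((4 * p + 3 : ℕ) : ℝ) = 4 * (p : ℝ) + 3 := by push_cast; ring
    have heq : (4 * (p:ℝ) + 3) * (15 / (p:ℝ)) = 60 + 45 / (p:ℝ) := by
      field_simp; ring
    have h45 : 45 / (p:ℝ) ≤ 45 := by
      rw [div_le_iff₀ hppos]; nlinarith
    rw [this, heq]; linarith
  calc Tgrow s ^ (4 * p + 3) ≤ Real.exp (15 / (p : ℝ)) ^ (4 * p + 3) := le_trans step1 step2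
    _ = Real.exp ((4 * p + 3 : ℕ) * (15 / (p : ℝ))) := step3
    _ ≤ Real.exp 105 := Real.exp_le_exp.mpr step4
end
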